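/- arXiv:1503.05744 — 8 statements merged into one kernel-verified Lean document; each statement's English description precedes it below -/
import Mathlib

section
/- Let a, b : ℕ → ℝ be sequences satisfying 0 < a(n+1) < b(n+1) < a(n) < 1 and a(n) < b(n) < 1 for all n, with a(n) → 0 as n → ∞. Define Ω ⊆ ℝ² by Ω := ((0,1) × (0,1)) \ ⋃_n ([a(n), b(n)] × [1/2, 1]). Then, with σ := H¹ restricted to the boundary ∂Ω, one has σ(∂Ω) = ∞, and the set on which σ is locally infinite is exactly the segment {0} × [1/2, 1]; that is, { z ∈ ∂Ω : H¹(∂Ω ∩ B(z, r)) = ∞ for every r > 0 } = {0} × [1/2, 1]. -/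
/-!
Each wall `{aₙ} × [1/2, 1]` lies in `∂Ω`, because it bounds the room `(bₙ₊₁, aₙ) × (0, 1) ⊆ Ω`
while belonging to the removed barrier `[aₙ, bₙ] × [1/2, 1]`. The walls accumulate on
`{0} × [1/2, 1]`: a neighbourhood of a point of this segment contains infinitely many disjoint
vertical pieces of walls, all of the same positive length, hence has infinite `H¹`-measure.
Away from the segment only finitely many barriers come close, so there `∂Ω` lies in the boundary
of the square and of finitely many rectangles, which has finite length. Both facts are proved in
`ℝ × ℝ` and transferred to the Euclidean plane by the coordinate map, which is bi-Lipschitz.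
-/

open MeasureTheory Metric Set ENNReal Filter Topology Function
open scoped NNReal

section LocallyInfiniteSet

variable {X Y : Type*}

/-- The set `Γ_ν^∞` for `ν = μ` restricted to `s`. -/
def locallyInfiniteSet [TopologicalSpace X] [MeasurableSpace X] (μ : Measure X) (s : Set X) :
    Set X :=
  {z ∈ s | ∀ U ∈ 𝓝 z, μ (s ∩ U) = ⊤}

theorem setOf_forall_ball_eq_top_eq_locallyInfiniteSet [PseudoMetricSpace X] [MeasurableSpace X]
    (μ : Measure X) (s : Set X) :
    {z ∈ s | ∀ r > (0 : ℝ), μ (s ∩ ball z r) = ⊤} = locallyInfiniteSet μ s := by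
  ext z
  refine and_congr_right fun _ => ⟨fun h U hU => ?_, fun h r hr => h _ (ball_mem_nhds z hr)⟩
  obtain ⟨r, hr, hrU⟩ := Metric.mem_nhds_iff.1 hU
  exact top_unique ((h r hr).ge.trans (measure_mono (inter_subset_inter_right s hrU)))

theorem mem_closure_of_forall_nhds_measure_inter_eq_top [TopologicalSpace X] [MeasurableSpace X]
    {μ : Measure X} {s : Set X} {z : X} (hz : ∀ U ∈ 𝓝 z, μ (s ∩ U) = ⊤) : z ∈ closure s :=
  mem_closure_iff_nhds.2 fun U hU =>
    nonempty_of_measure_ne_zero (by rw [inter_comm, hz U hU]; exact top_ne_zero)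

variable [EMetricSpace X] [EMetricSpace Y] [MeasurableSpace X] [BorelSpace X]
  [MeasurableSpace Y] [BorelSpace Y] {K K' : ℝ≥0} {d : ℝ}

theorem hausdorffMeasure_preimage_eq_top_iff {f : X → Y} (hf : LipschitzWith K f)
    (hf' : AntilipschitzWith K' f) (hsurj : Surjective f) (hd : 0 ≤ d) (s : Set Y) :
    μH[d] (f ⁻¹' s) = ⊤ ↔ μH[d] s = ⊤ := by
  have hK : (K : ℝ≥0∞) ^ d ≠ ⊤ := rpow_ne_top_of_nonneg hd coe_ne_top
  have hK' : (K' : ℝ≥0∞) ^ d ≠ ⊤ := rpow_ne_top_of_nonneg hd coe_ne_top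
  refine ⟨fun h => ?_, fun h => ?_⟩
  · by_contra hs
    exact mul_ne_top hK' hs (top_unique (h ▸ hf'.hausdorffMeasure_preimage_le hd s))
  · by_contra hs
    have := hf.hausdorffMeasure_image_le hd (f ⁻¹' s)
    rw [image_preimage_eq s hsurj, h] at this
    exact mul_ne_top hK hs (top_unique this)

theorem locallyInfiniteSet_hausdorffMeasure_preimage (e : X ≃ₜ Y) (he : LipschitzWith K e)
    (he' : AntilipschitzWith K' e) (hd : 0 ≤ d) (s : Set Y) :
    locallyInfiniteSet μH[d] (e ⁻¹' s) = e ⁻¹' locallyInfiniteSet μH[d] s := by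
  ext z
  refine and_congr_right fun _ => ⟨fun h V hV => ?_, fun h U hU => ?_⟩
  · rw [← hausdorffMeasure_preimage_eq_top_iff he he' e.surjective hd, preimage_inter]
    exact h _ (e.continuous.continuousAt.preimage_mem_nhds hV)
  · rw [← e.preimage_image U, ← preimage_inter,
      hausdorffMeasure_preimage_eq_top_iff he he' e.surjective hd]
    exact h _ (e.isOpenMap.image_mem_nhds hU)

end LocallyInfiniteSet

theorem finite_frontier_Icc (a b : ℝ) : (frontier (Icc a b)).Finite := by
  rcases le_or_gt a b with hab | hab
  · rw [frontier_Icc hab]; exact toFinite _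
  · rw [Icc_eq_empty_of_lt hab, frontier_empty]; exact finite_empty

theorem frontier_biUnion_subset {X ι : Type*} [TopologicalSpace X] {s : Set ι} (hs : s.Finite)
    (f : ι → Set X) : frontier (⋃ i ∈ s, f i) ⊆ ⋃ i ∈ s, frontier (f i) := by
  rintro x ⟨hx, hxi⟩
  rw [hs.closure_biUnion] at hx
  obtain ⟨i, hi, hxc⟩ := mem_iUnion₂.1 hx
  exact mem_iUnion₂.2 ⟨i, hi, hxc, fun h => hxi (interior_mono (subset_biUnion_of_mem hi) h)⟩

theorem frontier_diff_iUnion_inter_subset {X ι : Type*} [TopologicalSpace X] {U V : Set X}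
    {t : ι → Set X} {s : Set ι} (hs : s.Finite) (hV : IsOpen V)
    (hdisj : ∀ i ∉ s, Disjoint V (t i)) :
    frontier (U \ ⋃ i, t i) ∩ V ⊆ frontier U ∪ ⋃ i ∈ s, frontier (t i) := by
  have hloc : (U \ ⋃ i, t i) ∩ V = (U \ ⋃ i ∈ s, t i) ∩ V := by
    refine subset_antisymm
      (inter_subset_inter_left V (sdiff_subset_sdiff_right (iUnion₂_subset_iUnion _ t))) ?_
    rintro x ⟨⟨hU, hxs⟩, hV⟩
    refine ⟨⟨hU, fun hx => ?_⟩, hV⟩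
    obtain ⟨i, hi⟩ := mem_iUnion.1 hx
    by_cases his : i ∈ s
    · exact hxs (mem_biUnion his hi)
    · exact (hdisj i his).notMem_of_mem_left hV hi
  rw [← frontier_inter_open_inter hV, hloc, frontier_inter_open_inter hV, sdiff_eq]
  rintro x ⟨hx, -⟩
  rcases frontier_inter_subset _ _ hx with ⟨hxU, -⟩ | ⟨-, hxt⟩
  · exact Or.inl hxU
  · rw [frontier_compl] at hxt
    exact Or.inr (frontier_biUnion_subset hs t hxt)

theorem hausdorffMeasure_singleton_prod (c : ℝ) (t : Set ℝ) :
    μH[1] ({c} ×ˢ t) = volume t := by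
  have hc : Isometry (Prod.mk c : ℝ → ℝ × ℝ) := fun s t => by simp [Prod.edist_eq]
  rw [singleton_prod, hc.hausdorffMeasure_image (Or.inl zero_le_one), hausdorffMeasure_real]

theorem hausdorffMeasure_prod_singleton (t : Set ℝ) (c : ℝ) :
    μH[1] (t ×ˢ {c}) = volume t := by
  have hc : Isometry (fun x : ℝ => (x, c)) := fun s t => by simp [Prod.edist_eq]
  rw [prod_singleton, hc.hausdorffMeasure_image (Or.inl zero_le_one), hausdorffMeasure_real]

theorem hausdorffMeasure_frontier_prod_lt_top {s t : Set ℝ} (hs : Bornology.IsBounded s)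
    (ht : Bornology.IsBounded t) (hfs : (frontier s).Finite) (hft : (frontier t).Finite) :
    μH[1] (frontier (s ×ˢ t)) < ⊤ := by
  rw [frontier_prod_eq]
  refine measure_union_lt_top ?_ ?_
  · rw [← biUnion_of_singleton (frontier t), prod_iUnion₂]
    refine measure_biUnion_lt_top hft fun c _ => ?_
    rw [hausdorffMeasure_prod_singleton]
    exact hs.closure.measure_lt_top
  · rw [← biUnion_of_singleton (frontier s), iUnion₂_prod_const]
    refine measure_biUnion_lt_top hfs fun c _ => ?_
    rw [hausdorffMeasure_singleton_prod]
    exact ht.closure.measure_lt_top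

theorem hausdorffMeasure_prod_eq_top {A J : Set ℝ} (hA : A.Infinite) (hJ : MeasurableSet J)
    (hJ0 : volume J ≠ 0) : μH[1] (A ×ˢ J) = ⊤ := by
  let f := hA.natEmbedding
  have hdisj : Pairwise (Disjoint on fun k => {(f k : ℝ)} ×ˢ J) := fun k l hkl =>
    disjoint_prod.2 (Or.inl (disjoint_singleton.2 fun h => hkl (f.injective (Subtype.ext h))))
  refine top_unique ?_
  calc ⊤ = ∑' _ : ℕ, volume J := (ENNReal.tsum_const_eq_top_of_ne_zero hJ0).symm
    _ = μH[1] (⋃ k, {(f k : ℝ)} ×ˢ J) := by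
      rw [measure_iUnion hdisj fun k => (measurableSet_singleton _).prod hJ]
      simp only [hausdorffMeasure_singleton_prod]
    _ ≤ μH[1] (A ×ˢ J) :=
      measure_mono (iUnion_subset fun k => prod_mono (singleton_subset_iff.2 (f k).2) subset_rfl)

theorem hausdorffMeasure_inter_nhds_eq_top {F V : Set (ℝ × ℝ)} {c : ℕ → ℝ} (hc : Injective c)
    (hc0 : Tendsto c atTop (𝓝 0)) {p q : ℝ} (hpq : p < q) (hF : ∀ n, {c n} ×ˢ Icc p q ⊆ F)
    {y : ℝ} (hy : y ∈ Icc p q) (hV : V ∈ 𝓝 (0, y)) : μH[1] (F ∩ V) = ⊤ := by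
  obtain ⟨u, v, hu, h0u, hv, hyv, huv⟩ := mem_nhds_prod_iff'.1 hV
  have hA : (u ∩ range c).Infinite := by
    have : {n | c n ∈ u}.Infinite :=
      Nat.frequently_atTop_iff_infinite.1 (hc0.eventually (hu.mem_nhds h0u)).frequently
    exact (this.image hc.injOn).mono (by rintro _ ⟨n, hn, rfl⟩; exact ⟨hn, n, rfl⟩)
  have hJ : (Ioo p q ∩ v).Nonempty := by
    rw [inter_comm]
    exact mem_closure_iff.1 ((closure_Ioo hpq.ne).symm ▸ hy) v hv hyv
  refine top_unique ((hausdorffMeasure_prod_eq_top hA (measurableSet_Ioo.inter hv.measurableSet)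
    ((isOpen_Ioo.inter hv).measure_ne_zero volume hJ)).ge.trans (measure_mono ?_))
  rintro ⟨x, t⟩ ⟨⟨hxu, n, rfl⟩, htI, htv⟩
  exact ⟨hF n ⟨rfl, Ioo_subset_Icc_self htI⟩, huv ⟨hxu, htv⟩⟩

namespace RoomsAndPassages

def barrier (a b : ℕ → ℝ) (n : ℕ) : Set (ℝ × ℝ) := Icc (a n) (b n) ×ˢ Icc (1 / 2 : ℝ) 1

def domain (a b : ℕ → ℝ) : Set (ℝ × ℝ) := Ioo (0 : ℝ) 1 ×ˢ Ioo (0 : ℝ) 1 \ ⋃ n, barrier a b n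

variable {a b : ℕ → ℝ}

theorem room_subset_domain (ha : Antitone a) (hb : Antitone b) {n : ℕ} (hb0 : 0 ≤ b (n + 1))
    (ha1 : a n ≤ 1) : Ioo (b (n + 1)) (a n) ×ˢ Ioo (0 : ℝ) 1 ⊆ domain a b := by
  rintro ⟨x, y⟩ ⟨hx, hy⟩
  refine ⟨⟨⟨hb0.trans_lt hx.1, hx.2.trans_le ha1⟩, hy⟩, fun hmem => ?_⟩
  obtain ⟨m, ⟨ham, hbm⟩, -⟩ := mem_iUnion.1 hmem
  rcases le_or_gt m n with hmn | hnm
  · exact (hx.2.trans_le (ha hmn)).not_ge ham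
  · exact (hb hnm).trans_lt hx.1 |>.not_ge hbm

theorem singleton_prod_subset_frontier_domain (ha : Antitone a) (hb : Antitone b) {n : ℕ}
    (hb0 : 0 ≤ b (n + 1)) (hgap : b (n + 1) < a n) (ha1 : a n ≤ 1) (hab : a n ≤ b n) :
    {a n} ×ˢ Icc (1 / 2 : ℝ) 1 ⊆ frontier (domain a b) := by
  rw [← closure_sdiff_interior]
  rintro ⟨x, y⟩ ⟨hx, hy⟩
  rw [mem_singleton_iff] at hx
  subst hx
  refine ⟨closure_mono (room_subset_domain ha hb hb0 ha1) ?_, fun hp => ?_⟩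
  · rw [closure_prod_eq, closure_Ioo hgap.ne, closure_Ioo zero_ne_one]
    exact ⟨⟨hgap.le, le_rfl⟩, ⟨by linarith [hy.1], hy.2⟩⟩
  · exact (interior_subset hp).2 (mem_iUnion.2 ⟨n, ⟨le_rfl, hab⟩, hy⟩)

theorem eventually_disjoint_ball_barrier (ha : Tendsto a atTop (𝓝 0))
    (hb : Tendsto b atTop (𝓝 0)) {w : ℝ × ℝ} (hw : w ∉ ({0} : Set ℝ) ×ˢ Icc (1 / 2 : ℝ) 1) :
    ∃ r > 0, ∀ᶠ n in atTop, Disjoint (ball w r) (barrier a b n) := by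
  obtain ⟨r, hr, hball⟩ :=
    Metric.isOpen_iff.1 (isClosed_singleton.prod isClosed_Icc).isOpen_compl w hw
  refine ⟨r / 2, half_pos hr, ?_⟩
  filter_upwards [ha (ball_mem_nhds 0 (half_pos hr)), hb (ball_mem_nhds 0 (half_pos hr))]
    with n han hbn
  rw [disjoint_left]
  rintro p hpw ⟨hp1, hp2⟩
  have hp1' : dist p.1 0 < r / 2 := by
    rw [mem_preimage, Real.ball_eq_Ioo] at han hbn
    rw [← mem_ball, Real.ball_eq_Ioo]
    exact ⟨han.1.trans_le hp1.1, hp1.2.trans_lt hbn.2⟩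
  refine hball (a := ((0 : ℝ), p.2)) (mem_ball.2 ?_) ⟨mem_singleton _, hp2⟩
  calc dist ((0 : ℝ), p.2) w ≤ dist ((0 : ℝ), p.2) p + dist p w := dist_triangle _ _ _
    _ < r / 2 + r / 2 := by
      refine add_lt_add ?_ (mem_ball.1 hpw)
      rwa [Prod.dist_eq, dist_self, max_eq_left dist_nonneg, dist_comm]
    _ = r := add_halves r

theorem exists_nhds_hausdorffMeasure_frontier_domain_lt_top (ha : Tendsto a atTop (𝓝 0))
    (hb : Tendsto b atTop (𝓝 0)) {w : ℝ × ℝ} (hw : w ∉ ({0} : Set ℝ) ×ˢ Icc (1 / 2 : ℝ) 1) :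
    ∃ V ∈ 𝓝 w, μH[1] (frontier (domain a b) ∩ V) < ⊤ := by
  obtain ⟨r, hr, hdisj⟩ := eventually_disjoint_ball_barrier ha hb hw
  obtain ⟨N, hN⟩ := eventually_atTop.1 hdisj
  refine ⟨ball w r, ball_mem_nhds w hr, (measure_mono (frontier_diff_iUnion_inter_subset
    (finite_Iio N) isOpen_ball fun n hn => hN n (not_lt.1 hn))).trans_lt ?_⟩
  refine measure_union_lt_top ?_ (measure_biUnion_lt_top (finite_Iio N) fun n _ => ?_)
  · exact hausdorffMeasure_frontier_prod_lt_top (isBounded_Ioo 0 1) (isBounded_Ioo 0 1)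
      (by rw [frontier_Ioo zero_lt_one]; exact toFinite _)
      (by rw [frontier_Ioo zero_lt_one]; exact toFinite _)
  · exact hausdorffMeasure_frontier_prod_lt_top (isBounded_Icc _ _) (isBounded_Icc _ _)
      (finite_frontier_Icc _ _) (finite_frontier_Icc _ _)

theorem locallyInfiniteSet_frontier_domain (hpos : ∀ n, 0 < a (n + 1))
    (hab : ∀ n, a (n + 1) < b (n + 1)) (hba : ∀ n, b (n + 1) < a n) (ha1 : ∀ n, a n < 1)
    (hab0 : ∀ n, a n < b n) (hlim : Tendsto a atTop (𝓝 0)) :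
    locallyInfiniteSet μH[1] (frontier (domain a b)) = ({0} : Set ℝ) ×ˢ Icc (1 / 2 : ℝ) 1 := by
  have ha : StrictAnti a := strictAnti_nat_of_succ_lt fun n => (hab n).trans (hba n)
  have hb : StrictAnti b := strictAnti_nat_of_succ_lt fun n => (hba n).trans (hab0 n)
  have hb0 : ∀ n, 0 < b (n + 1) := fun n => (hpos n).trans (hab n)
  have hblim : Tendsto b atTop (𝓝 0) := (tendsto_add_atTop_iff_nat 1).1
    (squeeze_zero (fun n => (hb0 n).le) (fun n => (hba n).le) hlim)
  ext ⟨x, y⟩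
  refine ⟨fun ⟨_, hloc⟩ => ?_, fun ⟨hx, hy⟩ => ?_⟩
  · by_contra hz
    obtain ⟨V, hV, hfin⟩ := exists_nhds_hausdorffMeasure_frontier_domain_lt_top hlim hblim hz
    exact hfin.ne (hloc V hV)
  · rw [mem_singleton_iff] at hx
    subst hx
    have hloc : ∀ V ∈ 𝓝 ((0 : ℝ), y), μH[1] (frontier (domain a b) ∩ V) = ⊤ := fun V hV =>
      hausdorffMeasure_inter_nhds_eq_top ha.injective hlim (by norm_num) (fun n =>
        singleton_prod_subset_frontier_domain ha.antitone hb.antitone (hb0 n).le (hba n)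
          (ha1 n).le (hab0 n).le) hy hV
    exact ⟨isClosed_frontier.closure_subset
      (mem_closure_of_forall_nhds_measure_inter_eq_top hloc), hloc⟩

end RoomsAndPassages

open RoomsAndPassages in
theorem rooms_and_passages_example_general
    (a b : ℕ → ℝ)
    (hpos : ∀ n, 0 < a (n + 1))
    (hab : ∀ n, a (n + 1) < b (n + 1))
    (hba : ∀ n, b (n + 1) < a n)
    (ha1 : ∀ n, a n < 1)
    (hab0 : ∀ n, a n < b n)
    (hlim : Filter.Tendsto a Filter.atTop (nhds 0))
    (Ω : Set (EuclideanSpace ℝ (Fin 2)))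
    (hΩ : Ω = {p : EuclideanSpace ℝ (Fin 2) | p 0 ∈ Ioo (0 : ℝ) 1 ∧ p 1 ∈ Ioo (0 : ℝ) 1} \
      ⋃ n : ℕ, {p : EuclideanSpace ℝ (Fin 2) |
        p 0 ∈ Icc (a n) (b n) ∧ p 1 ∈ Icc (1 / 2 : ℝ) 1}) :
    μH[(1 : ℝ)] (frontier Ω) = ⊤ ∧
      {z ∈ frontier Ω | ∀ r > (0 : ℝ), μH[(1 : ℝ)] (frontier Ω ∩ ball z r) = ⊤} =
        {p : EuclideanSpace ℝ (Fin 2) | p 0 = 0 ∧ p 1 ∈ Icc (1 / 2 : ℝ) 1} := by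
  let L : EuclideanSpace ℝ (Fin 2) ≃L[ℝ] ℝ × ℝ :=
    (EuclideanSpace.equiv (Fin 2) ℝ).trans (ContinuousLinearEquiv.finTwoArrow ℝ ℝ)
  let e : EuclideanSpace ℝ (Fin 2) ≃ₜ ℝ × ℝ := L.toHomeomorph
  have hF : frontier Ω = e ⁻¹' frontier (domain a b) := by
    rw [e.preimage_frontier, hΩ]
    congr 1
    ext p
    simp only [domain, barrier, Set.mem_sdiff, mem_iUnion, mem_preimage, mem_prod, mem_ofPred_eq]
    rfl
  have hΓ : {z ∈ frontier Ω | ∀ r > (0 : ℝ), μH[(1 : ℝ)] (frontier Ω ∩ ball z r) = ⊤} =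
      {p : EuclideanSpace ℝ (Fin 2) | p 0 = 0 ∧ p 1 ∈ Icc (1 / 2 : ℝ) 1} := by
    rw [setOf_forall_ball_eq_top_eq_locallyInfiniteSet, hF,
      locallyInfiniteSet_hausdorffMeasure_preimage e L.lipschitz L.antilipschitz
        zero_le_one, locallyInfiniteSet_frontier_domain hpos hab hba ha1 hab0 hlim]
    rfl
  have hz : !₂[(0 : ℝ), 1] ∈
      {z ∈ frontier Ω | ∀ r > (0 : ℝ), μH[(1 : ℝ)] (frontier Ω ∩ ball z r) = ⊤} := by
    rw [hΓ]
    norm_num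
  exact ⟨top_unique ((hz.2 1 one_pos).ge.trans (measure_mono inter_subset_left)), hΓ⟩

/-- The "rooms and passages" example: for `Ω = (0,1)² \ ⋃_n [aₙ,bₙ] × [1/2,1]` with
`0 < aₙ₊₁ < bₙ₊₁ < aₙ < 1`, `aₙ < bₙ < 1` and `aₙ → 0`, the measure `σ = H¹|_{∂Ω}`
satisfies `σ(∂Ω) = ∞`, and the set on which `σ` is locally infinite is exactly
`{0} × [1/2, 1]`. -/
theorem rooms_and_passages_example
    (a b : ℕ → ℝ)
    (hpos : ∀ n, 0 < a (n + 1))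
    (hab : ∀ n, a (n + 1) < b (n + 1))
    (hba : ∀ n, b (n + 1) < a n)
    (ha1 : ∀ n, a n < 1)
    (hab0 : ∀ n, a n < b n)
    (hb1 : ∀ n, b n < 1)
    (hlim : Filter.Tendsto a Filter.atTop (nhds 0))
    (Ω : Set (EuclideanSpace ℝ (Fin 2)))
    (hΩ : Ω = {p : EuclideanSpace ℝ (Fin 2) | p 0 ∈ Ioo (0 : ℝ) 1 ∧ p 1 ∈ Ioo (0 : ℝ) 1} \
      ⋃ n : ℕ, {p : EuclideanSpace ℝ (Fin 2) |
        p 0 ∈ Icc (a n) (b n) ∧ p 1 ∈ Icc (1 / 2 : ℝ) 1}) :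
    μH[(1 : ℝ)] (frontier Ω) = ⊤ ∧
      {z ∈ frontier Ω | ∀ r > (0 : ℝ), μH[(1 : ℝ)] (frontier Ω ∩ ball z r) = ⊤} =
        {p : EuclideanSpace ℝ (Fin 2) | p 0 = 0 ∧ p 1 ∈ Icc (1 / 2 : ℝ) 1} :=
  rooms_and_passages_example_general a b hpos hab hba ha1 hab0 hlim Ω hΩ
end

section
/- Let H be a real Hilbert space, let ω > 0, and let A : H → H be ω-strongly monotone, i.e. ⟨A x − A y, x − y⟩ ≥ ω ‖x − y‖² for all x, y ∈ H. Let g₁, g₂ : [0, ∞) → H be continuous and let u₁, u₂ : [0, ∞) → H be differentiable with u_i'(t) + A(u_i(t)) = g_i(t) for all t ≥ 0 (i = 1, 2). Then for all 0 ≤ s ≤ t, e^{ω t} ‖u₁(t) − u₂(t)‖² ≤ e^{ω s} ‖u₁(s) − u₂(s)‖² + ω^{−1} ∫_s^t e^{ω τ} ‖g₁(τ) − g₂(τ)‖² dτ. -/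
/-!
For `w = u₁ - u₂` and `G = g₁ - g₂` the equations give `w' = G - (A u₁ - A u₂)`, so strong
monotonicity and Young's inequality `2 ‖G‖ ‖w‖ ≤ ω ‖w‖² + ω⁻¹ ‖G‖²` yield the differential
inequality `(‖w‖²)' ≤ ω⁻¹ ‖G‖² - ω ‖w‖²`. The weight `e^{ωt}` absorbs the term `- ω ‖w‖²`,
so `(e^{ωt} ‖w‖²)' ≤ ω⁻¹ e^{ωt} ‖G‖²`, which integrates to the estimate.
-/

open MeasureTheory Set Real
open scoped RealInnerProductSpace

section

variable {H : Type*} [NormedAddCommGroup H] [InnerProductSpace ℝ H]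

lemma mul_norm_sq_add_two_inner_le_of_strongly_monotone {ω : ℝ} (hω : 0 < ω) {A : H → H}
    (hA : ∀ x y : H, ω * ‖x - y‖ ^ 2 ≤ ⟪A x - A y, x - y⟫) (x y G : H) :
    ω * ‖x - y‖ ^ 2 + 2 * ⟪x - y, G - (A x - A y)⟫ ≤ ω⁻¹ * ‖G‖ ^ 2 := by
  have hG : ⟪x - y, G⟫ ≤ ‖x - y‖ * ‖G‖ := real_inner_le_norm _ _
  have hAxy : ω * ‖x - y‖ ^ 2 ≤ ⟪x - y, A x - A y⟫ := by
    rw [real_inner_comm]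
    exact hA x y
  have young := two_mul_le_add_mul_sq (a := ‖x - y‖) (b := ‖G‖) hω
  rw [inner_sub_right]
  linarith

lemma HasDerivAt.exp_mul_mul_norm_sq {w : ℝ → H} {w' : H} {t : ℝ} (hw : HasDerivAt w w' t)
    (ω : ℝ) :
    HasDerivAt (fun τ => Real.exp (ω * τ) * ‖w τ‖ ^ 2)
      (Real.exp (ω * t) * (ω * ‖w t‖ ^ 2 + 2 * ⟪w t, w'⟫)) t := by
  have hexp : HasDerivAt (fun τ => Real.exp (ω * τ)) (Real.exp (ω * t) * ω) t := by
    simpa using ((hasDerivAt_id t).const_mul ω).exp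
  exact (hexp.mul hw.norm_sq).congr_deriv (by ring)

end

theorem gronwall_strongly_monotone_general
    {H : Type*} [NormedAddCommGroup H] [InnerProductSpace ℝ H]
    (ω : ℝ) (hω : 0 < ω) (A : H → H)
    (hA : ∀ x y : H, ω * ‖x - y‖ ^ 2 ≤ @inner ℝ _ _ (A x - A y) (x - y))
    (g₁ g₂ : ℝ → H) (hg₁ : ContinuousOn g₁ (Ici 0)) (hg₂ : ContinuousOn g₂ (Ici 0))
    (u₁ u₂ u₁' u₂' : ℝ → H)
    (hu₁ : ∀ t : ℝ, 0 ≤ t → HasDerivAt u₁ (u₁' t) t ∧ u₁' t + A (u₁ t) = g₁ t)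
    (hu₂ : ∀ t : ℝ, 0 ≤ t → HasDerivAt u₂ (u₂' t) t ∧ u₂' t + A (u₂ t) = g₂ t) :
    ∀ s t : ℝ, 0 ≤ s → s ≤ t →
      Real.exp (ω * t) * ‖u₁ t - u₂ t‖ ^ 2 ≤
        Real.exp (ω * s) * ‖u₁ s - u₂ s‖ ^ 2 +
          ω⁻¹ * ∫ τ in s..t, Real.exp (ω * τ) * ‖g₁ τ - g₂ τ‖ ^ 2 := by
  intro s t hs hst
  have hIcc : Icc s t ⊆ Ici 0 := fun τ hτ => hs.trans hτ.1
  have hderiv (τ : ℝ) (hτ : 0 ≤ τ) :=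
    HasDerivAt.exp_mul_mul_norm_sq ((hu₁ τ hτ).1.sub (hu₂ τ hτ).1) ω
  have hbound (τ : ℝ) (hτ : 0 ≤ τ) :
      exp (ω * τ) * (ω * ‖u₁ τ - u₂ τ‖ ^ 2 + 2 * ⟪u₁ τ - u₂ τ, u₁' τ - u₂' τ⟫) ≤
        ω⁻¹ * (exp (ω * τ) * ‖g₁ τ - g₂ τ‖ ^ 2) := by
    have hw' : u₁' τ - u₂' τ = (g₁ τ - g₂ τ) - (A (u₁ τ) - A (u₂ τ)) := by
      rw [← (hu₁ τ hτ).2, ← (hu₂ τ hτ).2]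
      abel
    rw [hw', mul_left_comm]
    exact mul_le_mul_of_nonneg_left
      (mul_norm_sq_add_two_inner_le_of_strongly_monotone hω hA _ _ _) (exp_pos _).le
  have hcont : ContinuousOn (fun τ => exp (ω * τ) * ‖u₁ τ - u₂ τ‖ ^ 2) (Icc s t) :=
    fun τ hτ => (hderiv τ (hIcc hτ)).continuousAt.continuousWithinAt
  have hint : IntegrableOn (fun τ => ω⁻¹ * (exp (ω * τ) * ‖g₁ τ - g₂ τ‖ ^ 2)) (Icc s t) :=
    (continuousOn_const.mul ((by fun_prop : Continuous fun τ => exp (ω * τ)).continuousOn.mul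
      (((hg₁.sub hg₂).mono hIcc).norm.pow 2))).integrableOn_compact isCompact_Icc
  have key := intervalIntegral.sub_le_integral_of_hasDeriv_right_of_le hst hcont
    (fun τ hτ => (hderiv τ (hIcc (Ioo_subset_Icc_self hτ))).hasDerivWithinAt) hint
    (fun τ hτ => hbound τ (hIcc (Ioo_subset_Icc_self hτ)))
  rw [intervalIntegral.integral_const_mul] at key
  linarith

/-- **Weighted Gronwall estimate for strongly monotone evolution equations:** if `A` is
`ω`-strongly monotone and `u₁, u₂` solve `uᵢ' + A uᵢ = gᵢ` on `[0,∞)`, then for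
`0 ≤ s ≤ t`,
`e^{ωt}‖u₁(t)-u₂(t)‖² ≤ e^{ωs}‖u₁(s)-u₂(s)‖² + ω⁻¹ ∫_s^t e^{ωτ}‖g₁(τ)-g₂(τ)‖² dτ`. -/
theorem gronwall_strongly_monotone
    {H : Type*} [NormedAddCommGroup H] [InnerProductSpace ℝ H] [CompleteSpace H]
    (ω : ℝ) (hω : 0 < ω) (A : H → H)
    (hA : ∀ x y : H, ω * ‖x - y‖ ^ 2 ≤ @inner ℝ _ _ (A x - A y) (x - y))
    (g₁ g₂ : ℝ → H) (hg₁ : ContinuousOn g₁ (Ici 0)) (hg₂ : ContinuousOn g₂ (Ici 0))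
    (u₁ u₂ u₁' u₂' : ℝ → H)
    (hu₁ : ∀ t : ℝ, 0 ≤ t → HasDerivAt u₁ (u₁' t) t ∧ u₁' t + A (u₁ t) = g₁ t)
    (hu₂ : ∀ t : ℝ, 0 ≤ t → HasDerivAt u₂ (u₂' t) t ∧ u₂' t + A (u₂ t) = g₂ t) :
    ∀ s t : ℝ, 0 ≤ s → s ≤ t →
      Real.exp (ω * t) * ‖u₁ t - u₂ t‖ ^ 2 ≤
        Real.exp (ω * s) * ‖u₁ s - u₂ s‖ ^ 2 +
          ω⁻¹ * ∫ τ in s..t, Real.exp (ω * τ) * ‖g₁ τ - g₂ τ‖ ^ 2 :=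
  gronwall_strongly_monotone_general ω hω A hA g₁ g₂ hg₁ hg₂ u₁ u₂ u₁' u₂' hu₁ hu₂
end

section
/- Let H be a real Hilbert space, let ψ : H → ℝ be convex and differentiable with gradient ∇ψ : H → H (so that ψ has Fréchet derivative at every x represented by ∇ψ(x) via the inner product), and let v ∈ H satisfy ψ(v) = 0 and ψ(w) ≥ 0 for all w ∈ H. Let T > 0, let h : [0, T] → H be continuous, and let u : [0, T] → H be continuously differentiable with u'(t) + ∇ψ(u(t)) = h(t) for all t ∈ [0, T]. Then ∫_0^T ( ψ(u(t)) + ⟨h(t), v − u(t)⟩ ) dt ≤ (1/2) ‖v − u(0)‖² − (1/2) ‖v − u(T)‖². -/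
/-!
Along the flow, `d/dt ½‖v - u‖² = -⟪u', v - u⟫ = ⟪∇ψ(u) - h, v - u⟫`, and the gradient inequality
for the convex `ψ` bounds `⟪∇ψ(u), v - u⟫` by `ψ(v) - ψ(u) = -ψ(u)`. Integrating over `[0, T]`
gives the estimate.
-/

open Set

open scoped RealInnerProductSpace

namespace ConvexOn

variable {E : Type*} [NormedAddCommGroup E] [NormedSpace ℝ E] {s : Set E} {f : E → ℝ}
  {f' : E →L[ℝ] ℝ} {x y : E}

theorem add_fderiv_sub_le (hf : ConvexOn ℝ s f) (hx : x ∈ s) (hy : y ∈ s)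
    (hf' : HasFDerivAt f f' x) : f x + f' (y - x) ≤ f y := by
  let ℓ : ℝ →ᵃ[ℝ] E := AffineMap.lineMap x y
  have hf'ℓ : HasFDerivAt f f' (ℓ 0) := by simpa [ℓ] using hf'
  have hslope := (hf.comp_affineMap ℓ).le_slope_of_hasDerivAt
    (x := 0) (y := 1) (by simpa [ℓ] using hx) (by simpa [ℓ] using hy) one_pos
    (hf'ℓ.comp_hasDerivAt 0 AffineMap.hasDerivAt_lineMap)
  simp only [slope, ℓ, AffineMap.lineMap_apply_one, AffineMap.lineMap_apply_zero,
    Function.comp_apply, vsub_eq_sub, sub_zero, inv_one, one_smul] at hslope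
  linarith

end ConvexOn

section InnerProductSpace

variable {H : Type*} [NormedAddCommGroup H] [InnerProductSpace ℝ H]

theorem ConvexOn.add_inner_gradient_sub_le [CompleteSpace H] {s : Set H} {f : H → ℝ} {g x y : H}
    (hf : ConvexOn ℝ s f) (hx : x ∈ s) (hy : y ∈ s) (hg : HasGradientAt f g x) :
    f x + ⟪g, y - x⟫ ≤ f y := by
  simpa using hf.add_fderiv_sub_le hx hy hg.hasFDerivAt

theorem HasDerivAt.half_norm_const_sub_sq {u : ℝ → H} {u' v : H} {t : ℝ} (hu : HasDerivAt u u' t) :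
    HasDerivAt (fun s ↦ (1 / 2) * ‖v - u s‖ ^ 2) (-⟪u', v - u t⟫) t := by
  refine (((hu.const_sub v).norm_sq).const_mul (1 / 2)).congr_deriv ?_
  rw [inner_neg_right, real_inner_comm]
  ring

theorem intervalIntegral.integral_inner_deriv_const_sub {u u' : ℝ → H} {v : H} {a b : ℝ}
    (hu : ∀ t ∈ uIcc a b, HasDerivAt u (u' t) t) (hu' : ContinuousOn u' (uIcc a b)) :
    ∫ t in a..b, ⟪u' t, v - u t⟫ = (1 / 2) * ‖v - u a‖ ^ 2 - (1 / 2) * ‖v - u b‖ ^ 2 := by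
  have hucont : ContinuousOn u (uIcc a b) := fun t ht ↦ (hu t ht).continuousAt.continuousWithinAt
  have hFTC := intervalIntegral.integral_eq_sub_of_hasDerivAt
    (fun t ht ↦ (hu t ht).half_norm_const_sub_sq (v := v))
    ((hu'.inner (continuousOn_const.sub hucont)).neg.intervalIntegrable)
  rw [intervalIntegral.integral_neg] at hFTC
  linarith

end InnerProductSpace

theorem gradient_flow_energy_estimate_general
    {H : Type*} [NormedAddCommGroup H] [InnerProductSpace ℝ H] [CompleteSpace H]
    (ψ : H → ℝ) (ψ' : H → H)
    (hconv : ConvexOn ℝ Set.univ ψ)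
    (hgrad : ∀ x : H, HasGradientAt ψ (ψ' x) x)
    (v : H) (hv : ψ v = 0)
    (T : ℝ) (hT : 0 < T)
    (h : ℝ → H) (hh : ContinuousOn h (Icc 0 T))
    (u u' : ℝ → H)
    (hu : ∀ t ∈ Icc (0 : ℝ) T, HasDerivAt u (u' t) t)
    (hu' : ContinuousOn u' (Icc 0 T))
    (heq : ∀ t ∈ Icc (0 : ℝ) T, u' t + ψ' (u t) = h t) :
    (∫ t in (0 : ℝ)..T, (ψ (u t) + @inner ℝ _ _ (h t) (v - u t))) ≤
      (1 / 2) * ‖v - u 0‖ ^ 2 - (1 / 2) * ‖v - u T‖ ^ 2 := by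
  have hIcc : uIcc 0 T = Icc 0 T := uIcc_of_le hT.le
  have hucont : ContinuousOn u (Icc 0 T) := fun t ht ↦ (hu t ht).continuousAt.continuousWithinAt
  have hψcont : Continuous ψ :=
    continuous_iff_continuousAt.2 fun x ↦ (hgrad x).hasFDerivAt.continuousAt
  have hpointwise : ∀ t ∈ Icc 0 T, ψ (u t) + ⟪h t, v - u t⟫ ≤ ⟪u' t, v - u t⟫ := by
    intro t ht
    have hgradineq := hconv.add_inner_gradient_sub_le (mem_univ _) (mem_univ v) (hgrad (u t))
    rw [← heq t ht, inner_add_left]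
    linarith
  calc _ ≤ ∫ t in (0 : ℝ)..T, ⟪u' t, v - u t⟫ :=
        intervalIntegral.integral_mono_on hT.le
          (((hψcont.comp_continuousOn hucont).add
            (hh.inner (continuousOn_const.sub hucont))).intervalIntegrable_of_Icc hT.le)
          ((hu'.inner (continuousOn_const.sub hucont)).intervalIntegrable_of_Icc hT.le)
          hpointwise
    _ = _ := intervalIntegral.integral_inner_deriv_const_sub (hIcc ▸ hu) (hIcc ▸ hu')

/-- **Energy estimate (esta11) for a gradient flow:** if `ψ` is convex, differentiable with
gradient `∇ψ`, nonnegative and vanishing at `v`, and `u` is a `C¹` solution of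
`u' + ∇ψ(u) = h` on `[0,T]`, then
`∫_0^T (ψ(u(t)) + ⟪h(t), v - u(t)⟫) dt ≤ ½‖v - u(0)‖² - ½‖v - u(T)‖²`. -/
theorem gradient_flow_energy_estimate
    {H : Type*} [NormedAddCommGroup H] [InnerProductSpace ℝ H] [CompleteSpace H]
    (ψ : H → ℝ) (ψ' : H → H)
    (hconv : ConvexOn ℝ Set.univ ψ)
    (hgrad : ∀ x : H, HasGradientAt ψ (ψ' x) x)
    (v : H) (hv : ψ v = 0) (hmin : ∀ w : H, 0 ≤ ψ w)
    (T : ℝ) (hT : 0 < T)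
    (h : ℝ → H) (hh : ContinuousOn h (Icc 0 T))
    (u u' : ℝ → H)
    (hu : ∀ t ∈ Icc (0 : ℝ) T, HasDerivAt u (u' t) t)
    (hu' : ContinuousOn u' (Icc 0 T))
    (heq : ∀ t ∈ Icc (0 : ℝ) T, u' t + ψ' (u t) = h t) :
    (∫ t in (0 : ℝ)..T, (ψ (u t) + @inner ℝ _ _ (h t) (v - u t))) ≤
      (1 / 2) * ‖v - u 0‖ ^ 2 - (1 / 2) * ‖v - u T‖ ^ 2 :=
  gradient_flow_energy_estimate_general ψ ψ' hconv hgrad v hv T hT h hh u u' hu hu' heq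
end

section
/- Let c ≥ 1, C > 0 and δ ≥ 0 be real numbers, and let (X_k)_{k ≥ 1} be a sequence of nonnegative real numbers satisfying X_k ≤ max( C, (c · 2^{δ k})^{1/2^k} · X_{k−1} ) for every k ≥ 2. Then for every k ≥ 1, X_k ≤ c · 4^δ · max(C, X₁); in particular the sequence (X_k) is bounded, with sup_k X_k ≤ c · 4^δ · max(C, X₁). -/
/-!
Unrolling the recursion bounds `X k` by `(∏_{i=2}^k aᵢ) · max(C, X₁)` as soon as every factor
`aᵢ = (c · 2^{δi})^{1/2^i}` is at least `1`. For `i ≥ 2` we have `c ≤ √c ^ i`, so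
`aᵢ ≤ b ^ (i / 2^i)` with `b = √c · 2^δ`, and the product is at most `b ^ ∑ i/2^i ≤ b² = c · 4^δ`
because `∑ i/2^i = 2`.
-/

open Real Finset

lemma le_prod_mul_max_of_le_max_mul {C : ℝ} {a X : ℕ → ℝ} (hC : 0 ≤ C) (ha : ∀ k, 1 ≤ a k)
    (hrec : ∀ k, 2 ≤ k → X k ≤ max C (a k * X (k - 1))) :
    ∀ k, 1 ≤ k → X k ≤ (∏ i ∈ Icc 2 k, a i) * max C (X 1) := by
  have hM : 0 ≤ max C (X 1) := le_max_of_le_left hC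
  intro k hk
  induction k, hk using Nat.le_induction with
  | base => simp
  | succ n hn ih =>
    rw [prod_Icc_succ_top (by omega)]
    refine (hrec (n + 1) (by omega)).trans (max_le ?_ ?_)
    · calc C ≤ max C (X 1) := le_max_left _ _
        _ ≤ (∏ i ∈ Icc 2 n, a i) * a (n + 1) * max C (X 1) :=
          le_mul_of_one_le_left hM
            (one_le_mul_of_one_le_of_one_le (one_le_prod fun i _ ↦ ha i) (ha _))
    · calc a (n + 1) * X (n + 1 - 1) = a (n + 1) * X n := rfl
        _ ≤ a (n + 1) * ((∏ i ∈ Icc 2 n, a i) * max C (X 1)) :=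
          mul_le_mul_of_nonneg_left ih (zero_le_one.trans (ha _))
        _ = (∏ i ∈ Icc 2 n, a i) * a (n + 1) * max C (X 1) := by ring

lemma sum_natCast_div_two_pow_le_two (s : Finset ℕ) : ∑ i ∈ s, (i : ℝ) / 2 ^ i ≤ 2 := by
  have hsum := hasSum_coe_mul_geometric_of_norm_lt_one (r := (1 / 2 : ℝ)) (by norm_num)
  simp only [one_div, inv_pow, ← div_eq_mul_inv] at hsum
  norm_num at hsum
  exact sum_le_hasSum s (fun i _ ↦ by positivity) hsum

lemma prod_rpow_natCast_div_two_pow_le {b : ℝ} (hb : 1 ≤ b) (s : Finset ℕ) :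
    ∏ i ∈ s, b ^ ((i : ℝ) / 2 ^ i) ≤ b ^ 2 := by
  rw [← rpow_sum_of_pos (by linarith), ← rpow_natCast]
  exact rpow_le_rpow_of_exponent_le hb (by exact_mod_cast sum_natCast_div_two_pow_le_two s)

lemma one_le_rpow_one_div_two_pow {c δ : ℝ} (hc : 1 ≤ c) (hδ : 0 ≤ δ) (k : ℕ) :
    1 ≤ (c * 2 ^ (δ * k)) ^ ((1 : ℝ) / 2 ^ k) :=
  one_le_rpow (one_le_mul_of_one_le_of_one_le hc (one_le_rpow one_le_two (by positivity)))
    (by positivity)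

lemma rpow_one_div_two_pow_le {c : ℝ} (hc : 1 ≤ c) (δ : ℝ) {k : ℕ} (hk : 2 ≤ k) :
    (c * 2 ^ (δ * k)) ^ ((1 : ℝ) / 2 ^ k) ≤ (√c * 2 ^ δ) ^ ((k : ℝ) / 2 ^ k) := by
  have hbase : c * 2 ^ (δ * k) ≤ (√c * 2 ^ δ) ^ k := by
    rw [mul_pow, ← rpow_mul_natCast zero_le_two]
    gcongr
    calc c = √c ^ 2 := (sq_sqrt (by linarith)).symm
      _ ≤ √c ^ k := pow_le_pow_right₀ (one_le_sqrt.2 hc) hk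
  calc (c * 2 ^ (δ * k)) ^ ((1 : ℝ) / 2 ^ k) ≤ ((√c * 2 ^ δ) ^ k) ^ ((1 : ℝ) / 2 ^ k) := by
        gcongr
    _ = (√c * 2 ^ δ) ^ ((k : ℝ) / 2 ^ k) := by
        rw [← rpow_natCast, ← rpow_mul (by positivity), mul_one_div]

lemma sqrt_mul_two_rpow_sq {c : ℝ} (hc : 0 ≤ c) (δ : ℝ) : (√c * 2 ^ δ) ^ 2 = c * 4 ^ δ := by
  rw [mul_pow, sq_sqrt hc, rpow_pow_comm zero_le_two]
  norm_num

theorem alikakos_moser_iteration_general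
    (c C δ : ℝ) (hc : 1 ≤ c) (hC : 0 < C) (hδ : 0 ≤ δ)
    (X : ℕ → ℝ)
    (hrec : ∀ k : ℕ, 2 ≤ k →
      X k ≤ max C ((c * (2 : ℝ) ^ (δ * k)) ^ ((1 : ℝ) / 2 ^ k) * X (k - 1))) :
    ∀ k : ℕ, 1 ≤ k → X k ≤ c * (4 : ℝ) ^ δ * max C (X 1) := by
  intro k hk
  have hb : 1 ≤ √c * 2 ^ δ :=
    one_le_mul_of_one_le_of_one_le (one_le_sqrt.2 hc) (one_le_rpow one_le_two hδ)
  calc X k ≤ (∏ i ∈ Icc 2 k, (c * 2 ^ (δ * i)) ^ ((1 : ℝ) / 2 ^ i)) * max C (X 1) :=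
        le_prod_mul_max_of_le_max_mul hC.le (one_le_rpow_one_div_two_pow hc hδ) hrec k hk
    _ ≤ (∏ i ∈ Icc 2 k, (√c * 2 ^ δ) ^ ((i : ℝ) / 2 ^ i)) * max C (X 1) := by
        gcongr with i hi
        exact rpow_one_div_two_pow_le hc δ (mem_Icc.1 hi).1
    _ ≤ (√c * 2 ^ δ) ^ 2 * max C (X 1) := by
        gcongr
        exact prod_rpow_natCast_div_two_pow_le hb _
    _ = c * 4 ^ δ * max C (X 1) := by rw [sqrt_mul_two_rpow_sq (by linarith)]

/-- **Alikakos–Moser iteration lemma:** if `c ≥ 1`, `C > 0`, `δ ≥ 0` and the nonnegative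
sequence `(X_k)` satisfies `X_k ≤ max(C, (c·2^{δk})^{1/2^k} · X_{k-1})` for all `k ≥ 2`,
then `X_k ≤ c · 4^δ · max(C, X₁)` for every `k ≥ 1`; in particular `(X_k)` is bounded. -/
theorem alikakos_moser_iteration
    (c C δ : ℝ) (hc : 1 ≤ c) (hC : 0 < C) (hδ : 0 ≤ δ)
    (X : ℕ → ℝ) (hXnonneg : ∀ k, 0 ≤ X k)
    (hrec : ∀ k : ℕ, 2 ≤ k →
      X k ≤ max C ((c * (2 : ℝ) ^ (δ * k)) ^ ((1 : ℝ) / 2 ^ k) * X (k - 1))) :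
    ∀ k : ℕ, 1 ≤ k → X k ≤ c * (4 : ℝ) ^ δ * max C (X 1) :=
  alikakos_moser_iteration_general c C δ hc hC hδ X hrec
end

section
/- Let X be a metric space, let φ be a continuous semiflow on X, and let x ∈ X be such that the forward orbit { φ(t, x) : t ≥ 0 } has compact closure. Let V : X → ℝ be continuous and nonincreasing along trajectories, i.e. V(φ(t, y)) ≤ V(y) for all t ≥ 0 and y ∈ X. Then V is constant on the ω-limit set ω(x), with constant value lim_{t → ∞} V(φ(t, x)); consequently every y ∈ ω(x) satisfies V(φ(t, y)) = V(y) for all t ≥ 0 (LaSalle's invariance principle). -/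
/-! V is nonincreasing along the orbit of `x` and bounded below on its compact closure, so
`V (φ t x)` converges to some `ℓ`; by continuity `V = ℓ` at every cluster point of the orbit,
i.e. on `ω(x)`. Since `ω(x)` is forward invariant, `V (φ t y)` and `V y` are then both `ℓ`. -/

open Set Filter Topology omegaLimit

theorem AntitoneOn.exists_tendsto_atTop_of_bddBelow {α β : Type*} [LinearOrder α]
    [ConditionallyCompleteLinearOrder β] [TopologicalSpace β] [OrderTopology β]
    {f : α → β} {a : α} (hf : AntitoneOn f (Ici a)) (hb : BddBelow (f '' Ici a)) :
    ∃ ℓ, Tendsto f atTop (𝓝 ℓ) :=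
  ⟨_, tendsto_comp_val_Ici_atTop.1 <|
    tendsto_atTop_ciInf (fun s t hst => hf s.2 t.2 hst) (image_eq_range f (Ici a) ▸ hb)⟩

theorem MapClusterPt.eq_of_tendsto {ι X : Type*} [TopologicalSpace X] [T2Space X]
    {F : Filter ι} {u : ι → X} {x y : X} (hx : MapClusterPt x F u) (hy : Tendsto u F (𝓝 y)) :
    x = y :=
  eq_of_nhds_neBot (hx.clusterPt.mono hy)

theorem iInter_closure_tail_eq_omegaLimit {X : Type*} [TopologicalSpace X] (φ : ℝ → X → X)
    (x : X) : ⋂ s ∈ Ici (0 : ℝ), closure {y | ∃ t, s ≤ t ∧ φ t x = y} = ω atTop φ {x} := by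
  ext y
  rw [mem_omegaLimit_singleton_iff_mapClusterPt, mapClusterPt_atTop_iff_forall_mem_closure]
  simp only [mem_iInter, mem_Ici]
  refine ⟨fun h s => ?_, fun h s _ => h s⟩
  exact closure_mono (image_mono (Ici_subset_Ici.2 (le_max_left s 0))) (h _ (le_max_right s 0))

section Semiflow

variable {X : Type*} {φ : ℝ → X → X}

theorem antitoneOn_along_orbit
    (hsemi : ∀ t s : ℝ, 0 ≤ t → 0 ≤ s → ∀ x : X, φ (t + s) x = φ t (φ s x))
    {V : X → ℝ} (hdecr : ∀ t : ℝ, 0 ≤ t → ∀ y : X, V (φ t y) ≤ V y) (x : X) :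
    AntitoneOn (fun t => V (φ t x)) (Ici 0) := by
  intro s hs t ht hst
  have hsplit : φ t x = φ (t - s) (φ s x) := by
    rw [← hsemi (t - s) s (sub_nonneg.2 hst) hs, sub_add_cancel]
  simpa only [hsplit] using hdecr (t - s) (sub_nonneg.2 hst) (φ s x)

theorem mapsTo_omegaLimit_of_semiflow [TopologicalSpace X]
    (hsemi : ∀ t s : ℝ, 0 ≤ t → 0 ≤ s → ∀ x : X, φ (t + s) x = φ t (φ s x))
    (hcont : Continuous fun p : ℝ × X => φ p.1 p.2) {t : ℝ} (ht : 0 ≤ t) (s : Set X) :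
    MapsTo (φ t) (ω atTop φ s) (ω atTop φ s) :=
  (mapsTo_omegaLimit' (ϕ' := fun r => φ (t + r)) _ (mapsTo_id s)
      ((eventually_ge_atTop 0).mono fun r hr y _ => (hsemi t r ht hr y).symm)
      (hcont.comp (Continuous.prodMk_right t))).mono_right
    (omegaLimit_subset_of_tendsto φ s (tendsto_atTop_add_const_left atTop t tendsto_id))

end Semiflow

theorem lasalle_invariance_principle_general
    {X : Type*} [MetricSpace X]
    (φ : ℝ → X → X)
    (hcont : Continuous fun p : ℝ × X => φ p.1 p.2)
    (hsemi : ∀ t s : ℝ, 0 ≤ t → 0 ≤ s → ∀ x : X, φ (t + s) x = φ t (φ s x))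
    (x : X)
    (horbit : IsCompact (closure {y : X | ∃ t : ℝ, 0 ≤ t ∧ φ t x = y}))
    (V : X → ℝ) (hV : Continuous V)
    (hdecr : ∀ t : ℝ, 0 ≤ t → ∀ y : X, V (φ t y) ≤ V y) :
    (∃ ℓ : ℝ, Tendsto (fun t : ℝ => V (φ t x)) atTop (nhds ℓ) ∧
        ∀ y ∈ ⋂ s ∈ Ici (0 : ℝ), closure {y : X | ∃ t : ℝ, s ≤ t ∧ φ t x = y}, V y = ℓ) ∧
      ∀ y ∈ ⋂ s ∈ Ici (0 : ℝ), closure {y : X | ∃ t : ℝ, s ≤ t ∧ φ t x = y},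
        ∀ t : ℝ, 0 ≤ t → V (φ t y) = V y := by
  have hbdd : BddBelow ((fun t => V (φ t x)) '' Ici 0) :=
    (horbit.bddBelow_image hV.continuousOn).mono <| by
      rintro _ ⟨t, ht, rfl⟩
      exact mem_image_of_mem V (subset_closure ⟨t, ht, rfl⟩)
  obtain ⟨ℓ, hℓ⟩ := (antitoneOn_along_orbit hsemi hdecr x).exists_tendsto_atTop_of_bddBelow hbdd
  have hval : ∀ y ∈ ω atTop φ {x}, V y = ℓ := fun y hy =>
    (((mem_omegaLimit_singleton_iff_mapClusterPt _ _ x y).1 hy).continuousAt_comp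
      hV.continuousAt).eq_of_tendsto hℓ
  rw [iInter_closure_tail_eq_omegaLimit]
  exact ⟨⟨ℓ, hℓ, hval⟩, fun y hy t ht =>
    (hval _ (mapsTo_omegaLimit_of_semiflow hsemi hcont ht _ hy)).trans (hval y hy).symm⟩

/-- **LaSalle's invariance principle:** if `V` is a continuous Lyapunov function
(nonincreasing along trajectories) for a continuous semiflow `φ`, and the forward orbit
of `x` has compact closure, then `V` is constant on the ω-limit set `ω(x)`, with value
`lim_{t→∞} V(φ(t,x))`; consequently `V(φ(t,y)) = V(y)` for all `y ∈ ω(x)` and `t ≥ 0`. -/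
theorem lasalle_invariance_principle
    {X : Type*} [MetricSpace X]
    (φ : ℝ → X → X)
    (hcont : Continuous fun p : ℝ × X => φ p.1 p.2)
    (hid : ∀ x : X, φ 0 x = x)
    (hsemi : ∀ t s : ℝ, 0 ≤ t → 0 ≤ s → ∀ x : X, φ (t + s) x = φ t (φ s x))
    (x : X)
    (horbit : IsCompact (closure {y : X | ∃ t : ℝ, 0 ≤ t ∧ φ t x = y}))
    (V : X → ℝ) (hV : Continuous V)
    (hdecr : ∀ t : ℝ, 0 ≤ t → ∀ y : X, V (φ t y) ≤ V y) :
    (∃ ℓ : ℝ, Tendsto (fun t : ℝ => V (φ t x)) atTop (nhds ℓ) ∧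
        ∀ y ∈ ⋂ s ∈ Ici (0 : ℝ), closure {y : X | ∃ t : ℝ, s ≤ t ∧ φ t x = y}, V y = ℓ) ∧
      ∀ y ∈ ⋂ s ∈ Ici (0 : ℝ), closure {y : X | ∃ t : ℝ, s ≤ t ∧ φ t x = y},
        ∀ t : ℝ, 0 ≤ t → V (φ t y) = V y :=
  lasalle_invariance_principle_general φ hcont hsemi x horbit V hV hdecr
end

section
/- Let X be a nonempty metric space and let φ be a continuous semiflow on X possessing a compact absorbing set: there is a compact set K ⊆ X such that for every bounded set B ⊆ X there exists T ≥ 0 with φ(t, y) ∈ K for all t ≥ T and all y ∈ B. Then φ possesses a global attractor: there exists a nonempty compact set A ⊆ K such that φ(t, ·) maps A onto A for every t ≥ 0, and A attracts bounded sets, i.e. for every bounded B ⊆ X and every ε > 0 there is T ≥ 0 such that infDist(φ(t, y), A) ≤ ε for all t ≥ T and all y ∈ B. -/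
open Metric Set Filter Topology

/-- **Existence of the global attractor:** a continuous semiflow on a nonempty metric
space which admits a compact absorbing set `K` possesses a global attractor: a nonempty
compact strictly invariant set `A ⊆ K` that attracts all bounded sets. -/
theorem global_attractor_exists
    {X : Type*} [MetricSpace X] [Nonempty X]
    (φ : ℝ → X → X)
    (hcont : Continuous fun p : ℝ × X => φ p.1 p.2)
    (hid : ∀ x : X, φ 0 x = x)
    (hsemi : ∀ t s : ℝ, 0 ≤ t → 0 ≤ s → ∀ x : X, φ (t + s) x = φ t (φ s x))
    (K : Set X) (hK : IsCompact K)
    (habs : ∀ B : Set X, Bornology.IsBounded B →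
      ∃ T : ℝ, 0 ≤ T ∧ ∀ t : ℝ, T ≤ t → ∀ y ∈ B, φ t y ∈ K) :
    ∃ A : Set X, A ⊆ K ∧ A.Nonempty ∧ IsCompact A ∧
      (∀ t : ℝ, 0 ≤ t → φ t '' A = A) ∧
      ∀ B : Set X, Bornology.IsBounded B → ∀ ε : ℝ, 0 < ε →
        ∃ T : ℝ, 0 ≤ T ∧ ∀ t : ℝ, T ≤ t → ∀ y ∈ B, infDist (φ t y) A ≤ ε := by
  -- continuity of each time-t map
  have hct : ∀ t : ℝ, Continuous (φ t) := fun t =>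
    hcont.comp (continuous_const.prodMk continuous_id)
  -- K is nonempty
  obtain ⟨x₀⟩ := ‹Nonempty X›
  obtain ⟨T₀, hT₀, hT₀K⟩ := habs {x₀} (Bornology.isBounded_singleton)
  have hKne : K.Nonempty := ⟨φ T₀ x₀, hT₀K T₀ le_rfl x₀ rfl⟩
  -- K absorbs itself
  obtain ⟨T, hT0, hTK⟩ := habs K hK.isBounded
  -- the nested family
  set C : ℕ → Set X := fun n => closure (⋃ u ∈ Ici (T + n), φ u '' K) with hC
  have hUsubK : ∀ n : ℕ, (⋃ u ∈ Ici (T + n), φ u '' K) ⊆ K := by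
    intro n x hx
    simp only [mem_iUnion] at hx
    obtain ⟨u, hu, y, hy, rfl⟩ := hx
    exact hTK u (le_trans (le_add_of_nonneg_right (Nat.cast_nonneg n)) hu) y hy
  have hCK : ∀ n, C n ⊆ K := fun n =>
    closure_minimal (hUsubK n) hK.isClosed
  have hCcl : ∀ n, IsClosed (C n) := fun n => isClosed_closure
  have hCcomp : ∀ n, IsCompact (C n) := fun n =>
    hK.of_isClosed_subset (hCcl n) (hCK n)
  have hCanti : ∀ m n : ℕ, m ≤ n → C n ⊆ C m := by
    intro m n hmn
    apply closure_mono
    apply iUnion₂_mono'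
    intro u hu
    exact ⟨u, le_trans (show T + (m:ℝ) ≤ T + n by simpa using hmn) hu, le_rfl⟩
  have hCne : ∀ n, (C n).Nonempty := by
    intro n
    obtain ⟨x, hx⟩ := hKne
    refine ⟨φ (T + n) x, subset_closure ?_⟩
    simp only [mem_iUnion]
    exact ⟨T + n, Set.self_mem_Ici, x, hx, rfl⟩
  -- membership helper
  have hmemU : ∀ (n : ℕ) (u : ℝ) (x : X), T + n ≤ u → x ∈ K →
      φ u x ∈ ⋃ u ∈ Ici (T + (n:ℝ)), φ u '' K := by
    intro n u x hu hx
    simp only [mem_iUnion]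
    exact ⟨u, mem_Ici.2 hu, x, hx, rfl⟩
  set A : Set X := ⋂ n : ℕ, C n with hA
  have hAK : A ⊆ K := (iInter_subset C 0).trans (hCK 0)
  have hAcl : IsClosed A := isClosed_iInter hCcl
  have hAcomp : IsCompact A := hK.of_isClosed_subset hAcl hAK
  have hAne : A.Nonempty :=
    IsCompact.nonempty_iInter_of_sequence_nonempty_isCompact_isClosed C
      (fun i => hCanti i (i+1) (Nat.le_succ i)) hCne (hCcomp 0) hCcl
  -- forward invariance: φ t '' A ⊆ A
  have hfwd : ∀ t : ℝ, 0 ≤ t → φ t '' A ⊆ A := by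
    intro t ht x hx
    obtain ⟨a, ha, rfl⟩ := hx
    rw [hA, mem_iInter]
    intro n
    have ha' : a ∈ C n := mem_iInter.1 ha n
    have h1 : φ t a ∈ closure (φ t '' (⋃ u ∈ Ici (T + (n:ℝ)), φ u '' K)) :=
      (image_closure_subset_closure_image (hct t)) ⟨a, ha', rfl⟩
    refine closure_mono ?_ h1
    intro z hz
    obtain ⟨w, hw, rfl⟩ := hz
    simp only [mem_iUnion] at hw
    obtain ⟨u, hu, y, hy, rfl⟩ := hw
    have hu0 : (0:ℝ) ≤ u := le_trans (by positivity) hu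
    have := (hsemi t u ht hu0 y).symm
    rw [this]
    exact hmemU n (t + u) y (le_trans hu (le_add_of_nonneg_left ht)) hy
  -- backward: A ⊆ φ t '' A
  have hbwd : ∀ t : ℝ, 0 ≤ t → A ⊆ φ t '' A := by
    intro t ht a ha
    -- choose approximating points
    have hchoice : ∀ n : ℕ, ∃ (u : ℝ) (x : X), T + ((n : ℝ) + t) ≤ u ∧ x ∈ K ∧
        dist (φ u x) a < 1 / (n + 1) := by
      intro n
      have hm : a ∈ C (n + ⌈t⌉₊) := mem_iInter.1 ha (n + ⌈t⌉₊)
      rw [hC, Metric.mem_closure_iff] at hm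
      obtain ⟨b, hb, hdb⟩ := hm (1 / (n + 1)) (by positivity)
      simp only [mem_iUnion] at hb
      obtain ⟨u, hu, x, hx, rfl⟩ := hb
      refine ⟨u, x, ?_, hx, by rwa [dist_comm]⟩
      refine le_trans ?_ hu
      have : (n : ℝ) + t ≤ ((n + ⌈t⌉₊ : ℕ) : ℝ) := by
        push_cast
        have := Nat.le_ceil t
        linarith
      linarith
    choose u x hu hxK hd using hchoice
    -- the pulled-back points
    set y : ℕ → X := fun n => φ (u n - t) (x n) with hy
    have hun0 : ∀ n, (0:ℝ) ≤ u n - t := by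
      intro n
      have := hu n
      have : T + ((n:ℝ) + t) ≤ u n := this
      have hn : (0:ℝ) ≤ n := Nat.cast_nonneg n
      linarith
    have hyK : ∀ n, y n ∈ K := by
      intro n
      refine hTK (u n - t) ?_ (x n) (hxK n)
      have := hu n
      have hn : (0:ℝ) ≤ n := Nat.cast_nonneg n
      linarith
    have hφty : ∀ n, φ t (y n) = φ (u n) (x n) := by
      intro n
      rw [hy]
      rw [← hsemi t (u n - t) ht (hun0 n)]
      ring_nf
    obtain ⟨b, hbK, ψ, hψ, hconv⟩ := hK.tendsto_subseq hyK
    -- φ (u (ψ k)) (x (ψ k)) → a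
    have hdist0 : Tendsto (fun k => dist (φ (u (ψ k)) (x (ψ k))) a) atTop (𝓝 0) := by
      have h1 : Tendsto (fun k : ℕ => 1 / ((ψ k : ℝ) + 1)) atTop (𝓝 0) :=
        (tendsto_one_div_add_atTop_nhds_zero_nat).comp hψ.tendsto_atTop
      refine squeeze_zero (fun k => dist_nonneg) (fun k => le_of_lt (hd (ψ k))) h1
    have hconva : Tendsto (fun k => φ (u (ψ k)) (x (ψ k))) atTop (𝓝 a) :=
      tendsto_iff_dist_tendsto_zero.2 hdist0
    -- φ t b = a
    have hφtb : φ t b = a := by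
      have h2 : Tendsto (fun k => φ t (y (ψ k))) atTop (𝓝 (φ t b)) :=
        ((hct t).tendsto b).comp hconv
      have h3 : (fun k => φ t (y (ψ k))) = fun k => φ (u (ψ k)) (x (ψ k)) := by
        funext k; exact hφty (ψ k)
      rw [h3] at h2
      exact tendsto_nhds_unique h2 hconva
    -- b ∈ A
    have hbA : b ∈ A := by
      rw [hA, mem_iInter]
      intro n
      refine mem_closure_of_tendsto hconv ?_
      filter_upwards [hψ.tendsto_atTop.eventually_ge_atTop n] with k hk
      refine hmemU n (u (ψ k) - t) (x (ψ k)) ?_ (hxK (ψ k))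
      have h4 := hu (ψ k)
      have h5 : (n : ℝ) ≤ (ψ k : ℝ) := Nat.cast_le.2 hk
      linarith
    exact ⟨b, hbA, hφtb⟩
  -- attraction: C n eventually inside thickening ε A
  have hattr : ∀ ε : ℝ, 0 < ε → ∃ n : ℕ, C n ⊆ thickening ε A := by
    intro ε hε
    by_contra hcon
    push_neg at hcon
    set D : ℕ → Set X := fun n => C n ∩ (thickening ε A)ᶜ with hD
    have hDcl : ∀ n, IsClosed (D n) := fun n =>
      (hCcl n).inter (isOpen_thickening.isClosed_compl)
    have hDcomp : IsCompact (D 0) :=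
      (hCcomp 0).of_isClosed_subset (hDcl 0) inter_subset_left
    have hDne : ∀ n, (D n).Nonempty := by
      intro n
      obtain ⟨z, hz1, hz2⟩ := not_subset.1 (hcon n)
      exact ⟨z, hz1, hz2⟩
    have hDanti : ∀ i : ℕ, D (i + 1) ⊆ D i := fun i =>
      inter_subset_inter_left _ (hCanti i (i+1) (Nat.le_succ i))
    have hne := IsCompact.nonempty_iInter_of_sequence_nonempty_isCompact_isClosed D
      hDanti hDne hDcomp hDcl
    obtain ⟨z, hz⟩ := hne
    rw [mem_iInter] at hz
    have hzA : z ∈ A := by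
      rw [hA, mem_iInter]; exact fun n => (hz n).1
    exact (hz 0).2 (self_subset_thickening hε A hzA)
  refine ⟨A, hAK, hAne, hAcomp, fun t ht => Subset.antisymm (hfwd t ht) (hbwd t ht), ?_⟩
  intro B hB ε hε
  obtain ⟨n, hn⟩ := hattr ε hε
  obtain ⟨TB, hTB0, hTBK⟩ := habs B hB
  refine ⟨TB + (T + n), by positivity, ?_⟩
  intro t htt y hyB
  have h1 : φ TB y ∈ K := hTBK TB le_rfl y hyB
  have h2 : (0:ℝ) ≤ t - TB := by
    have hn0 : (0:ℝ) ≤ (n:ℝ) := Nat.cast_nonneg n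
    linarith
  have h3 : φ t y = φ (t - TB) (φ TB y) := by
    rw [← hsemi (t - TB) TB h2 hTB0]
    ring_nf
  have h4 : φ t y ∈ C n := by
    rw [h3]
    refine subset_closure (hmemU n (t - TB) (φ TB y) ?_ h1)
    linarith
  have h5 := hn h4
  rw [mem_thickening_iff_infDist_lt hAne] at h5
  exact le_of_lt h5
end

section
/- Let H, V, V₁ be real Banach spaces and let ι : V₁ → V be a compact continuous linear operator. Let B be a nonempty closed bounded subset of H, let S : B → B be a map, and suppose there exist a map T : B → V₁ and constants L ≥ 0, K ≥ 0 and 0 ≤ γ < 1/2 such that ‖T b₁ − T b₂‖_{V₁} ≤ L ‖b₁ − b₂‖_H and ‖S b₁ − S b₂‖_H ≤ γ ‖b₁ − b₂‖_H + K ‖ι(T b₁) − ι(T b₂)‖_V for all b₁, b₂ ∈ B. Then there exist a nonempty compact set M ⊆ B (compact in H) with S(M) ⊆ M, and constants C ≥ 0 and α > 0, such that for every n ∈ ℕ and every b ∈ B one has infDist(S^n b, M) ≤ C e^{−α n}; i.e. M is a semi-invariant compact set that attracts B exponentially under the iterates of S. -/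
open Metric Set Real

/-- Covering step: image of a set of radius `r` under `S` is covered by finitely
many closed balls of radius `(γ + 1/2) * r` centered inside the image. -/
theorem my_cover_step
    {H V V₁ : Type*}
    [NormedAddCommGroup H] [NormedSpace ℝ H]
    [NormedAddCommGroup V] [NormedSpace ℝ V]
    [NormedAddCommGroup V₁] [NormedSpace ℝ V₁]
    (ι : V₁ →L[ℝ] V) (hι : IsCompactOperator ι)
    (B : Set H) (S : H → H)
    (T : H → V₁) (L K γ : ℝ) (hL : 0 ≤ L) (hK : 0 ≤ K)
    (hγ0 : 0 ≤ γ) (hγ : γ < 1 / 2)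
    (hT : ∀ b₁ ∈ B, ∀ b₂ ∈ B, ‖T b₁ - T b₂‖ ≤ L * ‖b₁ - b₂‖)
    (hsq : ∀ b₁ ∈ B, ∀ b₂ ∈ B,
      ‖S b₁ - S b₂‖ ≤ γ * ‖b₁ - b₂‖ + K * ‖ι (T b₁) - ι (T b₂)‖)
    (A : Set H) (hAB : A ⊆ B) (hAne : A.Nonempty) (x : H) (r : ℝ) (hr : 0 < r)
    (hAr : A ⊆ closedBall x r) :
    ∃ F : Set H, F ⊆ S '' A ∧ F.Finite ∧
      S '' A ⊆ ⋃ y ∈ F, closedBall y ((γ + 1/2) * r) := by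
  classical
  obtain ⟨b₀, hb₀⟩ := hAne
  -- T '' A is bounded
  have hTA : Bornology.IsBounded (T '' A) := by
    apply (Metric.isBounded_iff_subset_closedBall (T b₀)).2
    refine ⟨L * (2 * r), ?_⟩
    rintro _ ⟨b, hb, rfl⟩
    have h1 : ‖T b - T b₀‖ ≤ L * ‖b - b₀‖ := hT b (hAB hb) b₀ (hAB hb₀)
    have h2 : ‖b - b₀‖ ≤ 2 * r := by
      have := dist_triangle_right b b₀ x
      have hb' := hAr hb; have hb0' := hAr hb₀
      rw [mem_closedBall] at hb' hb0'
      rw [← dist_eq_norm]; linarith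
    rw [mem_closedBall, dist_eq_norm]
    calc ‖T b - T b₀‖ ≤ L * ‖b - b₀‖ := h1
      _ ≤ L * (2 * r) := by nlinarith
  -- the image under ι is totally bounded
  have htb : TotallyBounded (ι '' (T '' A)) := by
    have := hι.isCompact_closure_image_of_bounded (f := (ι : V₁ →ₗ[ℝ] V)) hTA
    exact (this.totallyBounded).subset subset_closure
  set δ : ℝ := (1 - 2*γ) * r / (4 * (K + 1)) with hδdef
  have hδ : 0 < δ := by
    apply div_pos
    · nlinarith
    · nlinarith
  obtain ⟨t, htfin, hcov⟩ := (totallyBounded_iff.1 htb) δ hδ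
  -- choice of representatives
  set P : V → Set H := fun v => {b ∈ A | ι (T b) ∈ ball v δ} with hP
  set f : V → H := fun v => if h : (P v).Nonempty then S h.some else S b₀ with hf
  refine ⟨f '' t, ?_, htfin.image f, ?_⟩
  · rintro _ ⟨v, hv, rfl⟩
    by_cases h : (P v).Nonempty
    · simp only [hf, dif_pos h]
      exact ⟨h.some, h.some_mem.1, rfl⟩
    · simp only [hf, dif_neg h]
      exact ⟨b₀, hb₀, rfl⟩
  · rintro _ ⟨b, hb, rfl⟩
    have : ι (T b) ∈ ⋃ y ∈ t, ball y δ := hcov ⟨T b, ⟨b, hb, rfl⟩, rfl⟩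
    simp only [mem_iUnion, exists_prop] at this
    obtain ⟨v, hvt, hvb⟩ := this
    have hPne : (P v).Nonempty := ⟨b, hb, hvb⟩
    refine mem_iUnion₂.2 ⟨f v, ⟨v, hvt, rfl⟩, ?_⟩
    have hfv : f v = S hPne.some := by simp only [hf, dif_pos hPne]
    obtain ⟨hb'A, hb'v⟩ := hPne.some_mem
    set b' := hPne.some
    rw [mem_closedBall, dist_eq_norm, hfv]
    have h1 : ‖S b - S b'‖ ≤ γ * ‖b - b'‖ + K * ‖ι (T b) - ι (T b')‖ :=
      hsq b (hAB hb) b' (hAB hb'A)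
    have h2 : ‖b - b'‖ ≤ 2 * r := by
      have := dist_triangle_right b b' x
      have hb1 := hAr hb; have hb2 := hAr hb'A
      rw [mem_closedBall] at hb1 hb2
      rw [← dist_eq_norm]; linarith
    have h3 : ‖ι (T b) - ι (T b')‖ ≤ 2 * δ := by
      have := dist_triangle_right (ι (T b)) (ι (T b')) v
      rw [mem_ball] at hvb hb'v
      rw [← dist_eq_norm]; linarith
    have h4 : K * (2 * δ) ≤ (1 - 2*γ) * r / 2 := by
      have e1 : K * (2 * δ) ≤ (K + 1) * (2 * δ) := by nlinarith [hδ.le]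
      have e2 : (K + 1) * (2 * δ) = (1 - 2*γ) * r / 2 := by
        rw [hδdef]; field_simp; ring
      linarith
    calc ‖S b - S b'‖ ≤ γ * ‖b - b'‖ + K * ‖ι (T b) - ι (T b')‖ := h1
      _ ≤ γ * (2 * r) + K * (2 * δ) := by gcongr
      _ ≤ γ * (2 * r) + (1 - 2*γ) * r / 2 := by linarith
      _ = (γ + 1/2) * r := by ring

/-- **Abstract exponential attractor theorem (attraction part of Proposition 4.1):**
let `ι : V₁ → V` be a compact continuous linear map between Banach spaces, `B` a
nonempty closed bounded subset of a Banach space `H`, and `S : B → B` a map admitting a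
uniformly Lipschitz map `T : B → V₁` with the squeezing property
`‖Sb₁ - Sb₂‖ ≤ γ‖b₁ - b₂‖ + K‖ι(Tb₁) - ι(Tb₂)‖`, `0 ≤ γ < 1/2`. Then there is a
nonempty compact semi-invariant set `M ⊆ B` attracting `B` exponentially under the
iterates of `S`. -/
theorem discrete_exponential_attractor
    {H V V₁ : Type*}
    [NormedAddCommGroup H] [NormedSpace ℝ H] [CompleteSpace H]
    [NormedAddCommGroup V] [NormedSpace ℝ V] [CompleteSpace V]
    [NormedAddCommGroup V₁] [NormedSpace ℝ V₁] [CompleteSpace V₁]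
    (ι : V₁ →L[ℝ] V) (hι : IsCompactOperator ι)
    (B : Set H) (hBne : B.Nonempty) (hBclosed : IsClosed B)
    (hBbdd : Bornology.IsBounded B)
    (S : H → H) (hS : MapsTo S B B)
    (T : H → V₁) (L K γ : ℝ) (hL : 0 ≤ L) (hK : 0 ≤ K)
    (hγ0 : 0 ≤ γ) (hγ : γ < 1 / 2)
    (hT : ∀ b₁ ∈ B, ∀ b₂ ∈ B, ‖T b₁ - T b₂‖ ≤ L * ‖b₁ - b₂‖)
    (hsq : ∀ b₁ ∈ B, ∀ b₂ ∈ B,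
      ‖S b₁ - S b₂‖ ≤ γ * ‖b₁ - b₂‖ + K * ‖ι (T b₁) - ι (T b₂)‖) :
    ∃ M : Set H, M ⊆ B ∧ M.Nonempty ∧ IsCompact M ∧ MapsTo S M M ∧
      ∃ C α : ℝ, 0 ≤ C ∧ 0 < α ∧
        ∀ n : ℕ, ∀ b ∈ B, infDist (S^[n] b) M ≤ C * Real.exp (-α * n) := by
  classical
  set θ : ℝ := γ + 1/2 with hθdef
  have hθ0 : 0 < θ := by rw [hθdef]; linarith
  have hθ1 : θ < 1 := by rw [hθdef]; linarith
  obtain ⟨x₀, hx₀⟩ := hBne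
  obtain ⟨r₁, hr₁⟩ := (Metric.isBounded_iff_subset_closedBall x₀).1 hBbdd
  set r₀ : ℝ := max r₁ 1 with hr₀def
  have hr₀ : 0 < r₀ := lt_of_lt_of_le one_pos (le_max_right _ _)
  have hBr : B ⊆ closedBall x₀ r₀ :=
    hr₁.trans (closedBall_subset_closedBall (le_max_left _ _))
  have iter : ∀ n, S^[n] '' B ⊆ B := fun n => (hS.iterate n).image_subset
  have cover := my_cover_step ι hι B S T L K γ hL hK hγ0 hγ hT hsq
  -- the inductive covering sets
  set Good : ℕ → Set H → Prop := fun n E =>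
    E.Finite ∧ E.Nonempty ∧ E ⊆ S^[n+1] '' B ∧
      S^[n+1] '' B ⊆ ⋃ y ∈ E, closedBall y (θ^(n+1) * r₀) with hGooddef
  have base : ∃ E, Good 0 E := by
    obtain ⟨F, hF1, hF2, hF3⟩ := cover B subset_rfl ⟨x₀, hx₀⟩ x₀ r₀ hr₀ hBr
    have h1 : S^[0+1] '' B = S '' B := by rw [Function.iterate_one]
    have hFne : F.Nonempty := by
      obtain ⟨z, hz⟩ := (Set.Nonempty.image S ⟨x₀, hx₀⟩ : (S '' B).Nonempty)
      obtain ⟨y, hy, -⟩ := mem_iUnion₂.1 (hF3 hz)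
      exact ⟨y, hy⟩
    refine ⟨F, hF2, hFne, ?_, ?_⟩
    · rw [h1]; exact hF1
    · rw [h1, pow_one]; exact hF3
  have step : ∀ n (E : Set H), Good n E → ∃ E', Good (n+1) E' ∧ S '' E ⊆ E' := by
    intro n E hE
    obtain ⟨hfin, hne, hEsub, hEcov⟩ := hE
    set r : ℝ := θ^(n+1) * r₀ with hrdef
    have hr : 0 < r := by positivity
    set A : H → Set H := fun x => (S^[n+1] '' B) ∩ closedBall x r with hA
    have hF : ∀ x, ∃ F : Set H, F ⊆ S '' (A x) ∧ F.Finite ∧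
        S '' (A x) ⊆ ⋃ y ∈ F, closedBall y (θ * r) := by
      intro x
      by_cases h : (A x).Nonempty
      · have := cover (A x) (inter_subset_left.trans (iter (n+1))) h x r hr
          inter_subset_right
        rwa [← hθdef] at this
      · rw [not_nonempty_iff_eq_empty] at h
        exact ⟨∅, by simp [h]⟩
    choose F hF1 hF2 hF3 using hF
    have hiter : S^[n+1+1] '' B = S '' (S^[n+1] '' B) := by
      rw [Function.iterate_succ' S (n+1), Set.image_comp]
    refine ⟨S '' E ∪ ⋃ x ∈ E, F x, ⟨?_, ?_, ?_, ?_⟩, subset_union_left⟩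
    · exact (hfin.image S).union (hfin.biUnion fun x _ => hF2 x)
    · exact (hne.image S).inl
    · apply union_subset
      · rw [hiter]; exact image_mono (f := S) hEsub
      · refine iUnion₂_subset fun x hx => ?_
        rw [hiter]
        exact (hF1 x).trans (image_mono (f := S) inter_subset_left)
    · intro z hz
      rw [hiter] at hz
      obtain ⟨w, hw, rfl⟩ := hz
      obtain ⟨x, hxE, hwx⟩ := mem_iUnion₂.1 (hEcov hw)
      have hSw : S w ∈ S '' (A x) := ⟨w, ⟨hw, hwx⟩, rfl⟩
      obtain ⟨y, hyF, hySw⟩ := mem_iUnion₂.1 (hF3 x hSw)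
      refine mem_iUnion₂.2 ⟨y, Or.inr (mem_iUnion₂.2 ⟨x, hxE, hyF⟩), ?_⟩
      have : θ * r = θ^(n+1+1) * r₀ := by rw [hrdef]; ring
      rwa [this] at hySw
  choose! next hnext using step
  obtain ⟨E₀, hE₀⟩ := base
  set Eseq : ℕ → Set H := fun n => Nat.rec E₀ (fun n E => next n E) n with hEseqdef
  have hEseq : ∀ n, Good n (Eseq n) := by
    intro n
    induction n with
    | zero => exact hE₀
    | succ n ih => exact (hnext n _ ih).1
  have hEstep : ∀ n, S '' Eseq n ⊆ Eseq (n+1) := fun n => (hnext n _ (hEseq n)).2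
  set M : Set H := closure (⋃ n, Eseq n) with hM
  have hUB : (⋃ n, Eseq n) ⊆ B :=
    iUnion_subset fun n => (hEseq n).2.2.1.trans (iter (n+1))
  have hMB : M ⊆ B := hBclosed.closure_subset_iff.2 hUB
  have hMne : M.Nonempty := ((hEseq 0).2.1.mono (subset_iUnion _ 0)).closure
  -- monotonicity of iterated images
  have hmono : ∀ m n : ℕ, n ≤ m → S^[m] '' B ⊆ S^[n] '' B := by
    intro m n h
    obtain ⟨k, rfl⟩ := Nat.exists_eq_add_of_le h
    rw [Function.iterate_add S n k, Set.image_comp]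
    exact image_mono (iter k)
  -- total boundedness
  have htb : TotallyBounded (⋃ n, Eseq n) := by
    rw [Metric.totallyBounded_iff]
    intro ε hε
    obtain ⟨n, hn⟩ := exists_pow_lt_of_lt_one (div_pos hε hr₀) hθ1
    have hθn : θ^(n+1) * r₀ < ε := by
      have h1 : θ^(n+1) ≤ θ^n := pow_le_pow_of_le_one hθ0.le hθ1.le (Nat.le_succ n)
      have h2 : θ^n * r₀ < ε := by
        rw [← lt_div_iff₀ hr₀]; exact hn
      nlinarith
    refine ⟨⋃ k ∈ Iic n, Eseq k, (Set.finite_Iic n).biUnion fun k _ => (hEseq k).1, ?_⟩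
    intro z hz
    obtain ⟨m, hzm⟩ := mem_iUnion.1 hz
    rcases le_or_gt m n with hmn | hmn
    · exact mem_iUnion₂.2 ⟨z, mem_iUnion₂.2 ⟨m, hmn, hzm⟩, mem_ball_self hε⟩
    · have hz' : z ∈ S^[n+1] '' B :=
        hmono (m+1) (n+1) (by omega) ((hEseq m).2.2.1 hzm)
      obtain ⟨y, hyE, hzy⟩ := mem_iUnion₂.1 ((hEseq n).2.2.2 hz')
      refine mem_iUnion₂.2 ⟨y, mem_iUnion₂.2 ⟨n, le_refl n, hyE⟩, ?_⟩
      rw [mem_ball]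
      exact lt_of_le_of_lt (mem_closedBall.1 hzy) hθn
  have hMcompact : IsCompact M :=
    TotallyBounded.isCompact_of_isClosed htb.closure isClosed_closure
  -- S is Lipschitz on B
  set c : ℝ := γ + K * ‖ι‖ * L with hc
  have hc0 : 0 ≤ c := by positivity
  have hlip : LipschitzOnWith c.toNNReal S B := by
    apply LipschitzOnWith.of_dist_le_mul
    intro b₁ hb₁ b₂ hb₂
    rw [Real.coe_toNNReal c hc0, dist_eq_norm, dist_eq_norm]
    have h1 := hsq b₁ hb₁ b₂ hb₂
    have h2 : ‖ι (T b₁) - ι (T b₂)‖ ≤ ‖ι‖ * ‖T b₁ - T b₂‖ := by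
      rw [← map_sub]; exact ι.le_opNorm _
    have h3 := hT b₁ hb₁ b₂ hb₂
    have h4 : ‖ι‖ * ‖T b₁ - T b₂‖ ≤ ‖ι‖ * (L * ‖b₁ - b₂‖) := by
      gcongr
    nlinarith [norm_nonneg (b₁ - b₂), norm_nonneg ι]
  have hScont : ContinuousOn S B := hlip.continuousOn
  have hSM : MapsTo S M M := by
    intro z hz
    have h1 : S '' M ⊆ closure (S '' ⋃ n, Eseq n) :=
      (hScont.mono (hMB.trans subset_rfl)).image_closure
    have h2 : S '' ⋃ n, Eseq n ⊆ ⋃ n, Eseq n := by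
      rw [image_iUnion]
      exact iUnion_subset fun n => (hEstep n).trans (subset_iUnion _ (n+1))
    exact (h1.trans (closure_mono h2)) ⟨z, hz, rfl⟩
  -- attraction
  refine ⟨M, hMB, hMne, hMcompact, hSM, 2 * r₀, -Real.log θ, by positivity,
    by simpa using Real.log_neg hθ0 hθ1, ?_⟩
  intro n b hb
  have hexp : Real.exp (-(-Real.log θ) * n) = θ^n := by
    rw [neg_neg, mul_comm, Real.exp_nat_mul, Real.exp_log hθ0]
  rw [hexp]
  match n with
  | 0 =>
    obtain ⟨y₀, hy₀⟩ := hMne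
    have h1 : dist b y₀ ≤ 2 * r₀ := by
      have hb' := mem_closedBall.1 (hBr hb)
      have hy' := mem_closedBall.1 (hBr (hMB hy₀))
      calc dist b y₀ ≤ dist b x₀ + dist y₀ x₀ := dist_triangle_right b y₀ x₀
        _ ≤ 2 * r₀ := by linarith
    simpa using (infDist_le_dist_of_mem hy₀).trans h1
  | (m+1) =>
    have hz : S^[m+1] b ∈ S^[m+1] '' B := ⟨b, hb, rfl⟩
    obtain ⟨y, hyE, hby⟩ := mem_iUnion₂.1 ((hEseq m).2.2.2 hz)
    have hyM : y ∈ M := subset_closure (mem_iUnion.2 ⟨m, hyE⟩)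
    calc infDist (S^[m+1] b) M ≤ dist (S^[m+1] b) y := infDist_le_dist_of_mem hyM
      _ ≤ θ^(m+1) * r₀ := mem_closedBall.1 hby
      _ ≤ 2 * r₀ * θ^(m+1) := by nlinarith [pow_nonneg hθ0.le (m+1)]
end

section
/- Let H be a real Hilbert space, let ω > 0, and let A : H → H be ω-strongly monotone, i.e. ⟨A x − A y, x − y⟩ ≥ ω ‖x − y‖² for all x, y ∈ H. Let g : [0, ∞) → H be continuously differentiable and let u : [0, ∞) → H be differentiable with u'(t) + A(u(t)) = g(t) for all t ≥ 0. Then for all 0 ≤ s ≤ t, ‖u'(t)‖² ≤ e^{−ω (t − s)} ‖u'(s)‖² + ω^{−1} ∫_s^t e^{−ω (t − τ)} ‖g'(τ)‖² dτ. -/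
/-!
Since `A` need not be continuous, `u'` need not be differentiable, so one works with the
difference quotients `v_h = h⁻¹ • (u (· + h) - u)`. Strong monotonicity gives
`⟪v_h', v_h⟫ ≤ ⟪b_h, v_h⟫ - ω ‖v_h‖²`, where `b_h` is the difference quotient of `g`, hence
`(‖v_h‖²)' ≤ -ω ‖v_h‖² + ω⁻¹ ‖b_h‖²`, and Grönwall's inequality bounds `‖v_h t‖²`. As `h → 0⁺`,
`v_h → u'` pointwise, while `b_h → g'` boundedly on `[s, t]` by the mean value inequality, so
dominated convergence passes to the limit in the integral.
-/

open MeasureTheory Set Filter Topology Real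
open scoped InnerProductSpace

theorem le_exp_mul_add_integral_of_hasDerivAt_le {φ φ' β : ℝ → ℝ} {ω s t : ℝ} (hst : s ≤ t)
    (hφ : ContinuousOn φ (Icc s t)) (hφ' : ∀ τ ∈ Ioo s t, HasDerivAt φ (φ' τ) τ)
    (hβ : ContinuousOn β (Icc s t)) (hle : ∀ τ ∈ Ioo s t, φ' τ ≤ -ω * φ τ + β τ) :
    φ t ≤ exp (-ω * (t - s)) * φ s + ∫ τ in s..t, exp (-ω * (t - τ)) * β τ := by
  set γ : ℝ → ℝ := fun r => exp (ω * r) * β r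
  have hγ : ContinuousOn γ (Icc s t) := by fun_prop
  have hanti : AntitoneOn (fun τ => exp (ω * τ) * φ τ - ∫ r in s..τ, γ r) (Icc s t) := by
    refine antitoneOn_of_hasDerivWithinAt_nonpos (convex_Icc s t)
      (f' := fun τ => exp (ω * τ) * (ω * φ τ + φ' τ) - γ τ) ?_ ?_ ?_
    · have hprim := intervalIntegral.continuousOn_primitive_interval
        (hγ.integrableOn_compact (μ := volume) isCompact_Icc |>.mono_set (uIcc_of_le hst).le)
      rw [uIcc_of_le hst] at hprim
      exact (by fun_prop : ContinuousOn (fun τ => exp (ω * τ)) _).mul hφ |>.sub hprim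
    · rw [interior_Icc]
      intro τ hτ
      have hnhds : Icc s t ∈ 𝓝 τ := Icc_mem_nhds hτ.1 hτ.2
      have hprim : HasDerivAt (fun σ => ∫ r in s..σ, γ r) (γ τ) τ :=
        intervalIntegral.integral_hasDerivAt_right
          (hγ.mono (uIcc_of_le hτ.1.le ▸ Icc_subset_Icc_right hτ.2.le)).intervalIntegrable
          ⟨Icc s t, hnhds, hγ.aestronglyMeasurable measurableSet_Icc⟩ (hγ.continuousAt hnhds)
      have hexp : HasDerivAt (fun σ => exp (ω * σ)) (exp (ω * τ) * ω) τ := by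
        simpa using ((hasDerivAt_id τ).const_mul ω).exp
      exact ((hexp.mul (hφ' τ hτ)).sub hprim).hasDerivWithinAt.congr_deriv (by ring)
    · rw [interior_Icc]
      intro τ hτ
      have := mul_le_mul_of_nonneg_left (hle τ hτ) (exp_pos (ω * τ)).le
      simp only [γ]
      linarith
  have hψ := hanti (left_mem_Icc.2 hst) (right_mem_Icc.2 hst) hst
  simp only [intervalIntegral.integral_same, sub_zero] at hψ
  have hkernel : ∀ τ, exp (-ω * (t - τ)) = exp (-(ω * t)) * exp (ω * τ) := fun τ => by
    rw [← exp_add]; ring_nf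
  calc φ t = exp (-(ω * t)) * (exp (ω * t) * φ t) := by
        rw [← mul_assoc, ← exp_add, neg_add_cancel, exp_zero, one_mul]
    _ ≤ exp (-(ω * t)) * (exp (ω * s) * φ s + ∫ r in s..t, γ r) :=
        mul_le_mul_of_nonneg_left (by linarith) (exp_pos _).le
    _ = _ := by
        simp only [γ, hkernel, mul_assoc, intervalIntegral.integral_const_mul]
        ring

section

variable {H : Type*} [NormedAddCommGroup H] [InnerProductSpace ℝ H]

theorem norm_sq_le_of_inner_deriv_le
    {v v' b : ℝ → H} {ω s t : ℝ} (hω : 0 < ω) (hst : s ≤ t)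
    (hv : ∀ τ ∈ Icc s t, HasDerivAt v (v' τ) τ) (hb : ContinuousOn b (Icc s t))
    (hdiss : ∀ τ ∈ Ioo s t, ⟪v' τ, v τ⟫_ℝ ≤ ⟪b τ, v τ⟫_ℝ - ω * ‖v τ‖ ^ 2) :
    ‖v t‖ ^ 2 ≤ exp (-ω * (t - s)) * ‖v s‖ ^ 2
      + ω⁻¹ * ∫ τ in s..t, exp (-ω * (t - τ)) * ‖b τ‖ ^ 2 := by
  have hdecay : ∀ τ ∈ Ioo s t, 2 * ⟪v τ, v' τ⟫_ℝ ≤ -ω * ‖v τ‖ ^ 2 + ω⁻¹ * ‖b τ‖ ^ 2 := by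
    intro τ hτ
    -- weighted AM-GM: `2 ‖b‖ ‖v‖ ≤ ω ‖v‖² + ω⁻¹ ‖b‖²`
    have hsq : 0 ≤ ω⁻¹ * (ω * ‖v τ‖ - ‖b τ‖) ^ 2 := by positivity
    have hexpand : ω⁻¹ * (ω * ‖v τ‖ - ‖b τ‖) ^ 2
        = ω * ‖v τ‖ ^ 2 - 2 * (‖b τ‖ * ‖v τ‖) + ω⁻¹ * ‖b τ‖ ^ 2 := by
      field_simp; ring
    rw [real_inner_comm]
    linarith [hdiss τ hτ, real_inner_le_norm (b τ) (v τ)]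
  have hvc : ContinuousOn v (Icc s t) := fun τ hτ => (hv τ hτ).continuousAt.continuousWithinAt
  have := le_exp_mul_add_integral_of_hasDerivAt_le hst (by fun_prop)
    (fun τ hτ => (hv τ (Ioo_subset_Icc_self hτ)).norm_sq) (by fun_prop) hdecay
  simpa only [mul_left_comm _ ω⁻¹, intervalIntegral.integral_const_mul] using this

theorem inner_smul_sub_le_of_strongly_monotone {A : H → H} {ω : ℝ}
    (hA : ∀ x y : H, ω * ‖x - y‖ ^ 2 ≤ ⟪A x - A y, x - y⟫_ℝ) (c : ℝ) {x₁ x₂ y₁ y₂ f₁ f₂ : H}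
    (h₁ : y₁ + A x₁ = f₁) (h₂ : y₂ + A x₂ = f₂) :
    ⟪c • (y₁ - y₂), c • (x₁ - x₂)⟫_ℝ
      ≤ ⟪c • (f₁ - f₂), c • (x₁ - x₂)⟫_ℝ - ω * ‖c • (x₁ - x₂)‖ ^ 2 := by
  have hy : y₁ - y₂ = (f₁ - f₂) - (A x₁ - A x₂) := by rw [← h₁, ← h₂]; abel
  simp only [hy, real_inner_smul_left, real_inner_smul_right, inner_sub_left (f₁ - f₂), norm_smul,
    mul_pow, Real.norm_eq_abs, sq_abs]
  nlinarith [mul_le_mul_of_nonneg_left (hA x₁ x₂) (sq_nonneg c)]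

theorem exists_norm_slope_le {g g' : ℝ → H} {a b : ℝ}
    (hg : ∀ τ ∈ Ici a, HasDerivAt g (g' τ) τ) (hg' : ContinuousOn g' (Ici a)) :
    ∃ C, ∀ h ∈ Ioc (0 : ℝ) 1, ∀ τ ∈ Icc a b, ‖h⁻¹ • (g (τ + h) - g τ)‖ ≤ C := by
  obtain ⟨C, hC⟩ := isCompact_Icc.exists_bound_of_continuousOn
    (hg'.mono fun x (hx : x ∈ Icc a (b + 1)) => hx.1)
  refine ⟨C, fun h hh τ hτ => ?_⟩
  have hlip := (convex_Icc a (b + 1)).norm_image_sub_le_of_norm_hasDerivWithin_le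
    (x := τ) (y := τ + h) (fun x hx => (hg x hx.1).hasDerivWithinAt) hC
    ⟨hτ.1, by linarith [hτ.2]⟩ ⟨by linarith [hτ.1, hh.1], by linarith [hτ.2, hh.2]⟩
  rw [add_sub_cancel_left, Real.norm_eq_abs, abs_of_pos hh.1] at hlip
  rw [norm_smul, norm_inv, Real.norm_eq_abs, abs_of_pos hh.1, inv_mul_le_iff₀ hh.1]
  linarith

theorem tendsto_integral_mul_norm_slope_sq {g g' : ℝ → H} {w : ℝ → ℝ} {a b : ℝ} (hab : a ≤ b)
    (hg : ∀ τ ∈ Ici a, HasDerivAt g (g' τ) τ) (hg' : ContinuousOn g' (Ici a))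
    (hw : IntervalIntegrable w volume a b) :
    Tendsto (fun h => ∫ τ in a..b, w τ * ‖h⁻¹ • (g (τ + h) - g τ)‖ ^ 2) (𝓝[>] 0)
      (𝓝 (∫ τ in a..b, w τ * ‖g' τ‖ ^ 2)) := by
  obtain ⟨C, hC⟩ := exists_norm_slope_le (b := b) hg hg'
  have hgc : ContinuousOn g (Ici a) := fun τ hτ => (hg τ hτ).continuousAt.continuousWithinAt
  refine intervalIntegral.tendsto_integral_filter_of_dominated_convergence
    (fun τ => |w τ| * C ^ 2) ?_ ?_ (hw.norm.mul_const _) ?_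
  · filter_upwards [self_mem_nhdsWithin] with h (hh : 0 < h)
    rw [uIoc_of_le hab]
    refine (uIoc_of_le hab ▸ hw.def').aestronglyMeasurable.mul
      (ContinuousOn.aestronglyMeasurable ?_ measurableSet_Ioc)
    have hshift : MapsTo (· + h) (Ioc a b) (Ici a) := fun τ hτ => by
      simp only [mem_Ici]; linarith [hτ.1]
    exact ((hgc.comp (by fun_prop) hshift).sub (hgc.mono fun τ hτ => hτ.1.le)).const_smul _
      |>.norm.pow 2
  · filter_upwards [Ioc_mem_nhdsGT zero_lt_one] with h hh
    refine ae_of_all _ fun τ hτ => ?_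
    rw [uIoc_of_le hab] at hτ
    rw [norm_mul, norm_pow, norm_norm, Real.norm_eq_abs]
    gcongr
    exact hC h hh τ (Ioc_subset_Icc_self hτ)
  · refine ae_of_all _ fun τ hτ => ?_
    rw [uIoc_of_le hab] at hτ
    exact ((hg τ (mem_Ici.2 hτ.1.le)).tendsto_slope_zero_right.norm.pow 2).const_mul _

theorem norm_slope_sq_le_of_strongly_monotone {A : H → H} {ω s t h : ℝ} {g u u' : ℝ → H}
    (hω : 0 < ω) (hA : ∀ x y : H, ω * ‖x - y‖ ^ 2 ≤ ⟪A x - A y, x - y⟫_ℝ)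
    (hg : ContinuousOn g (Ici s))
    (hu : ∀ τ ∈ Ici s, HasDerivAt u (u' τ) τ ∧ u' τ + A (u τ) = g τ) (hh : 0 ≤ h) (hst : s ≤ t) :
    ‖h⁻¹ • (u (t + h) - u t)‖ ^ 2 ≤ exp (-ω * (t - s)) * ‖h⁻¹ • (u (s + h) - u s)‖ ^ 2
      + ω⁻¹ * ∫ τ in s..t, exp (-ω * (t - τ)) * ‖h⁻¹ • (g (τ + h) - g τ)‖ ^ 2 := by
  have hshift : MapsTo (· + h) (Icc s t) (Ici s) := fun τ hτ => by
    simp only [mem_Ici]; linarith [hτ.1]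
  refine norm_sq_le_of_inner_deriv_le hω hst (v' := fun τ => h⁻¹ • (u' (τ + h) - u' τ))
    (fun τ hτ => (((hu _ (hshift hτ)).1.comp_add_const τ h).sub (hu τ hτ.1).1).const_smul h⁻¹)
    (((hg.comp (by fun_prop) hshift).sub (hg.mono fun τ hτ => hτ.1)).const_smul h⁻¹)
    (fun τ hτ => inner_smul_sub_le_of_strongly_monotone hA h⁻¹
      (hu _ (hshift (Ioo_subset_Icc_self hτ))).2 (hu τ hτ.1.le).2)

end

theorem derivative_decay_strongly_monotone_general
    {H : Type*} [NormedAddCommGroup H] [InnerProductSpace ℝ H]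
    (ω : ℝ) (hω : 0 < ω) (A : H → H)
    (hA : ∀ x y : H, ω * ‖x - y‖ ^ 2 ≤ @inner ℝ _ _ (A x - A y) (x - y))
    (g g' : ℝ → H)
    (hg : ∀ t : ℝ, 0 ≤ t → HasDerivAt g (g' t) t)
    (hg' : ContinuousOn g' (Ici 0))
    (u u' : ℝ → H)
    (hu : ∀ t : ℝ, 0 ≤ t → HasDerivAt u (u' t) t ∧ u' t + A (u t) = g t) :
    ∀ s t : ℝ, 0 ≤ s → s ≤ t →
      ‖u' t‖ ^ 2 ≤
        Real.exp (-ω * (t - s)) * ‖u' s‖ ^ 2 +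
          ω⁻¹ * ∫ τ in s..t, Real.exp (-ω * (t - τ)) * ‖g' τ‖ ^ 2 := by
  intro s t hs hst
  have hg_s : ∀ τ ∈ Ici s, HasDerivAt g (g' τ) τ := fun τ hτ => hg τ (hs.trans hτ)
  have hu_s : ∀ τ ∈ Ici s, HasDerivAt u (u' τ) τ ∧ u' τ + A (u τ) = g τ :=
    fun τ hτ => hu τ (hs.trans hτ)
  have hslope_u : ∀ r ∈ Ici s,
      Tendsto (fun h => ‖h⁻¹ • (u (r + h) - u r)‖ ^ 2) (𝓝[>] 0) (𝓝 (‖u' r‖ ^ 2)) :=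
    fun r hr => (hu_s r hr).1.tendsto_slope_zero_right.norm.pow 2
  have hweight : Continuous fun τ => exp (-ω * (t - τ)) := by fun_prop
  have hslope_g := tendsto_integral_mul_norm_slope_sq hst hg_s
    (hg'.mono fun τ hτ => hs.trans hτ) (hweight.intervalIntegrable s t)
  refine le_of_tendsto_of_tendsto (hslope_u t hst)
    (((hslope_u s self_mem_Ici).const_mul _).add (hslope_g.const_mul ω⁻¹)) ?_
  filter_upwards [self_mem_nhdsWithin] with h (hh : 0 < h)
  exact norm_slope_sq_le_of_strongly_monotone hω hA
    (fun τ hτ => (hg_s τ hτ).continuousAt.continuousWithinAt) hu_s hh.le hst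

/-- **Derivative decay estimate (esta10):** if `A` is `ω`-strongly monotone, `g` is `C¹`
and `u` solves `u' + A u = g` on `[0,∞)`, then for `0 ≤ s ≤ t`,
`‖u'(t)‖² ≤ e^{-ω(t-s)}‖u'(s)‖² + ω⁻¹ ∫_s^t e^{-ω(t-τ)}‖g'(τ)‖² dτ`. -/
theorem derivative_decay_strongly_monotone
    {H : Type*} [NormedAddCommGroup H] [InnerProductSpace ℝ H] [CompleteSpace H]
    (ω : ℝ) (hω : 0 < ω) (A : H → H)
    (hA : ∀ x y : H, ω * ‖x - y‖ ^ 2 ≤ @inner ℝ _ _ (A x - A y) (x - y))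
    (g g' : ℝ → H)
    (hg : ∀ t : ℝ, 0 ≤ t → HasDerivAt g (g' t) t)
    (hg' : ContinuousOn g' (Ici 0))
    (u u' : ℝ → H)
    (hu : ∀ t : ℝ, 0 ≤ t → HasDerivAt u (u' t) t ∧ u' t + A (u t) = g t) :
    ∀ s t : ℝ, 0 ≤ s → s ≤ t →
      ‖u' t‖ ^ 2 ≤
        Real.exp (-ω * (t - s)) * ‖u' s‖ ^ 2 +
          ω⁻¹ * ∫ τ in s..t, Real.exp (-ω * (t - τ)) * ‖g' τ‖ ^ 2 :=
  derivative_decay_strongly_monotone_general ω hω A hA g g' hg hg' u u' hu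
end
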